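/- arXiv:2002.04536 — 13 statements merged into one kernel-verified Lean document; each statement's English description precedes it below -/
import Mathlib

section
/- Let r : ℕ → ℕ with r n ≥ 1 for all n, and for each n ∈ ℕ let A_n be an r(n)×r(n+1) real matrix, B_n an r(n)×r(n) real matrix, and (for n ≥ 1) C_n an r(n)×r(n−1) real matrix. Suppose there exist symmetric real matrices Π_n of size r(n)×r(n) such that for all n: (i) Π_n·A_n = C_{n+1}ᵀ·Π_{n+1}; (ii) Π_n·B_n = B_nᵀ·Π_n; and the stochasticity conditions hold: B_0·e + A_0·e = e, and C_n·e + B_n·e + A_n·e = e for all n ≥ 1, where e denotes the all-ones column vector of the appropriate size. Then the row vector π whose n-th block is (Π_n e)ᵀ is invariant for the block tridiagonal matrix P with diagonal blocks B_n, upper blocks A_n and lower blocks C_n; explicitly, eᵀΠ_0 B_0 + eᵀΠ_1 C_1 = eᵀΠ_0, and for every n ≥ 1, eᵀΠ_{n−1} A_{n−1} + eᵀΠ_n B_n + eᵀΠ_{n+1} C_{n+1} = eᵀΠ_n. -/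
/-!
The symmetrization relations say that `π` satisfies detailed balance: transposing
`Π_n A_n = C_{n+1}ᵀ Π_{n+1}` gives `Π_{n+1} C_{n+1} = A_nᵀ Π_n`, so every block of `π P`
ending in column block `n` can be rewritten as `(X e)ᵀ Π_n` with `X ∈ {C_n, B_n, A_n}`.
Summing, the row sums `C_n e + B_n e + A_n e = e` leave `eᵀ Π_n`.
-/

open Matrix

namespace Matrix

variable {m n R : Type*} [Fintype m] [Fintype n] [CommSemiring R]

theorem mul_eq_transpose_mul_of_mul_eq_transpose_mul {P : Matrix m m R} {Q : Matrix n n R}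
    {A : Matrix m n R} {C : Matrix n m R} (hP : P.IsSymm) (hQ : Q.IsSymm)
    (h : P * A = Cᵀ * Q) : Q * C = Aᵀ * P := by
  simpa only [transpose_mul, transpose_transpose, hP.eq, hQ.eq] using (congrArg transpose h).symm

theorem vecMul_transpose_mul (v : m → R) (M : Matrix n m R) (P : Matrix n n R) :
    v ᵥ* (Mᵀ * P) = (M *ᵥ v) ᵥ* P := by
  rw [← vecMul_vecMul, vecMul_transpose]

end Matrix

theorem stmt_1_general (r : ℕ → ℕ)
    (A : (n : ℕ) → Matrix (Fin (r n)) (Fin (r (n + 1))) ℝ)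
    (B : (n : ℕ) → Matrix (Fin (r n)) (Fin (r n)) ℝ)
    (C : (n : ℕ) → Matrix (Fin (r (n + 1))) (Fin (r n)) ℝ)
    (Pi : (n : ℕ) → Matrix (Fin (r n)) (Fin (r n)) ℝ)
    (hPisymm : ∀ n, (Pi n)ᵀ = Pi n)
    (hsym1 : ∀ n, Pi n * A n = (C n)ᵀ * Pi (n + 1))
    (hsym2 : ∀ n, Pi n * B n = (B n)ᵀ * Pi n)
    (hstoch0 : B 0 *ᵥ (fun _ => (1 : ℝ)) + A 0 *ᵥ (fun _ => (1 : ℝ)) = fun _ => (1 : ℝ))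
    (hstoch : ∀ n, C n *ᵥ (fun _ => (1 : ℝ)) + B (n + 1) *ᵥ (fun _ => (1 : ℝ))
      + A (n + 1) *ᵥ (fun _ => (1 : ℝ)) = fun _ => (1 : ℝ)) :
    ((fun _ => (1 : ℝ)) ᵥ* (Pi 0 * B 0) + (fun _ => (1 : ℝ)) ᵥ* (Pi 1 * C 0)
        = (fun _ => (1 : ℝ)) ᵥ* Pi 0)
    ∧ ∀ n, (fun _ => (1 : ℝ)) ᵥ* (Pi n * A n)
        + (fun _ => (1 : ℝ)) ᵥ* (Pi (n + 1) * B (n + 1))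
        + (fun _ => (1 : ℝ)) ᵥ* (Pi (n + 2) * C (n + 1))
        = (fun _ => (1 : ℝ)) ᵥ* Pi (n + 1) := by
  have balance : ∀ n, Pi (n + 1) * C n = (A n)ᵀ * Pi n := fun n =>
    mul_eq_transpose_mul_of_mul_eq_transpose_mul (hPisymm n) (hPisymm (n + 1)) (hsym1 n)
  constructor
  · rw [hsym2 0, balance 0, vecMul_transpose_mul, vecMul_transpose_mul, ← add_vecMul, hstoch0]
  · intro n
    rw [hsym1 n, hsym2 (n + 1), balance (n + 1), vecMul_transpose_mul, vecMul_transpose_mul,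
      vecMul_transpose_mul, ← add_vecMul, ← add_vecMul, hstoch n]

/-- Invariant measure for a discrete-time QBD process: if the block tridiagonal
stochastic matrix `P = tridiag(C_{n+1}, B_n, A_n)` (rows summing to one) admits
symmetric matrices `Π_n` with `Π_n A_n = C_{n+1}ᵀ Π_{n+1}` and `Π_n B_n = B_nᵀ Π_n`,
then the row vector `π` with blocks `(Π_n e)ᵀ` satisfies `π P = π`.
Here `C n` denotes the block `C_{n+1}` of size `r(n+1) × r(n)`. -/
theorem stmt_1 (r : ℕ → ℕ) (hr : ∀ n, 1 ≤ r n)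
    (A : (n : ℕ) → Matrix (Fin (r n)) (Fin (r (n + 1))) ℝ)
    (B : (n : ℕ) → Matrix (Fin (r n)) (Fin (r n)) ℝ)
    (C : (n : ℕ) → Matrix (Fin (r (n + 1))) (Fin (r n)) ℝ)
    (Pi : (n : ℕ) → Matrix (Fin (r n)) (Fin (r n)) ℝ)
    (hPisymm : ∀ n, (Pi n)ᵀ = Pi n)
    (hsym1 : ∀ n, Pi n * A n = (C n)ᵀ * Pi (n + 1))
    (hsym2 : ∀ n, Pi n * B n = (B n)ᵀ * Pi n)
    (hstoch0 : B 0 *ᵥ (fun _ => (1 : ℝ)) + A 0 *ᵥ (fun _ => (1 : ℝ)) = fun _ => (1 : ℝ))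
    (hstoch : ∀ n, C n *ᵥ (fun _ => (1 : ℝ)) + B (n + 1) *ᵥ (fun _ => (1 : ℝ))
      + A (n + 1) *ᵥ (fun _ => (1 : ℝ)) = fun _ => (1 : ℝ)) :
    ((fun _ => (1 : ℝ)) ᵥ* (Pi 0 * B 0) + (fun _ => (1 : ℝ)) ᵥ* (Pi 1 * C 0)
        = (fun _ => (1 : ℝ)) ᵥ* Pi 0)
    ∧ ∀ n, (fun _ => (1 : ℝ)) ᵥ* (Pi n * A n)
        + (fun _ => (1 : ℝ)) ᵥ* (Pi (n + 1) * B (n + 1))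
        + (fun _ => (1 : ℝ)) ᵥ* (Pi (n + 2) * C (n + 1))
        = (fun _ => (1 : ℝ)) ᵥ* Pi (n + 1) :=
  stmt_1_general r A B C Pi hPisymm hsym1 hsym2 hstoch0 hstoch
end

section
/- Let α, β, γ, δ > −1 be real numbers and let S = (0,1)×(0,1). (i) For every τ with 0 < τ < 1, the integral ∫_S x^α(1−x)^β y^γ(1−y)^δ / (1 − τx − (1−τ)y) dx dy is infinite if and only if β + δ ≤ −1. (ii) For τ = 1, the integral ∫_S x^α(1−x)^{β−1} y^γ(1−y)^δ dx dy is infinite if and only if β ≤ 0. (iii) For τ = 0, the integral ∫_S x^α(1−x)^β y^γ(1−y)^{δ−1} dx dy is infinite if and only if δ ≤ 0. -/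
/-!
Everything reduces to the beta-type integrals `∫₀¹ x^a (1-x)^b dx`, which are finite iff
`a, b > -1`. For `τ = 1` or `τ = 0` the integrand is a product of two of them.

For `0 < τ < 1` the denominator is `τ(1-x) + (1-τ)(1-y)`. Weighted AM–GM bounds it below by a
constant times `(1-x)^s (1-y)^(1-s)`; when `β + δ > -1` one can take `s ∈ (0, 1)` with
`s < β + 1` and `1 - s < δ + 1`, which bounds the integral by a product of finite beta
integrals. Conversely, on the wedge `(1-x)/2 < 1-y < 1-x` at the corner `(1, 1)` the integrand
is at least a constant times `(1-x)^(β+δ-1)`, and the wedge has width `(1-x)/2`, leaving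
`∫ (1-x)^(β+δ) dx`, which diverges when `β + δ ≤ -1`.
-/

open MeasureTheory Set
open scoped ENNReal

lemma min_rpow_le_rpow_of_mem_Icc {a b t : ℝ} (ha : 0 < a) (ht : t ∈ Icc a b) (e : ℝ) :
    min (a ^ e) (b ^ e) ≤ t ^ e := by
  rcases le_or_gt 0 e with he | he
  · exact (min_le_left _ _).trans (Real.rpow_le_rpow ha.le ht.1 he)
  · exact (min_le_right _ _).trans (Real.rpow_le_rpow_of_nonpos (ha.trans_le ht.1) ht.2 he.le)

lemma rpow_le_max_rpow_of_mem_Icc {a b t : ℝ} (ha : 0 < a) (ht : t ∈ Icc a b) (e : ℝ) :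
    t ^ e ≤ max (a ^ e) (b ^ e) := by
  rcases le_or_gt 0 e with he | he
  · exact (Real.rpow_le_rpow (ha.le.trans ht.1) ht.2 he).trans (le_max_right _ _)
  · exact (Real.rpow_le_rpow_of_nonpos ha ht.1 he.le).trans (le_max_left _ _)

lemma lintegral_eq_top_iff_of_le_of_le {X : Type*} [MeasurableSpace X] {μ : Measure X}
    {f g : X → ℝ≥0∞} {c C : ℝ≥0∞} (hc : c ≠ 0) (hC : C ≠ ⊤)
    (hgf : ∀ᵐ x ∂μ, c * g x ≤ f x) (hfg : ∀ᵐ x ∂μ, f x ≤ C * g x) :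
    ∫⁻ x, f x ∂μ = ⊤ ↔ ∫⁻ x, g x ∂μ = ⊤ := by
  constructor
  · intro hf
    have : C * ∫⁻ x, g x ∂μ = ⊤ := by
      rw [← lintegral_const_mul' C g hC, eq_top_iff, ← hf]
      exact lintegral_mono_ae hfg
    exact (ENNReal.mul_eq_top.1 this).elim (fun h => h.2) (fun h => absurd h.1 hC)
  · intro hg
    rw [eq_top_iff, ← ENNReal.mul_top hc, ← hg]
    exact (lintegral_const_mul_le c g).trans (lintegral_mono_ae hgf)

lemma setLIntegral_Ioo_rpow_eq_top_iff {c : ℝ} (hc : 0 < c) (a : ℝ) :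
    ∫⁻ x in Ioo 0 c, ENNReal.ofReal (x ^ a) = ⊤ ↔ a ≤ -1 := by
  rw [← not_iff_not, ← ne_eq, lintegral_ofReal_ne_top_iff_integrable (by fun_prop), not_le]
  · exact intervalIntegral.integrableOn_Ioo_rpow_iff hc
  · filter_upwards [ae_restrict_mem measurableSet_Ioo] with x hx
    exact Real.rpow_nonneg hx.1.le a

lemma setLIntegral_Ioo_comp_one_sub (f : ℝ → ℝ≥0∞) (a b : ℝ) :
    ∫⁻ x in Ioo (1 - b) (1 - a), f (1 - x) = ∫⁻ x in Ioo a b, f x := by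
  rw [← preimage_const_sub_Ioo]
  exact (Measure.measurePreserving_sub_left volume 1).setLIntegral_comp_preimage_emb
    (MeasurableEquiv.subLeft (1 : ℝ)).measurableEmbedding f _

/-- `B(a + 1, b + 1)`, as a lintegral so that it makes sense (possibly `⊤`) for all exponents. -/
noncomputable def betaLIntegral (a b : ℝ) : ℝ≥0∞ :=
  ∫⁻ x in Ioo 0 1, ENNReal.ofReal (x ^ a * (1 - x) ^ b)

lemma setLIntegral_Ioo_zero_half_eq_top_iff (a b : ℝ) :
    ∫⁻ x in Ioo 0 (1 / 2), ENNReal.ofReal (x ^ a * (1 - x) ^ b) = ⊤ ↔ a ≤ -1 := by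
  rw [← setLIntegral_Ioo_rpow_eq_top_iff (by norm_num : (0 : ℝ) < 1 / 2) a]
  have h_one_sub : ∀ x ∈ Ioo (0 : ℝ) (1 / 2), 1 - x ∈ Icc (1 / 2) 1 :=
    fun x hx => ⟨by linarith [hx.2], by linarith [hx.1]⟩
  have h_mul : ∀ x m : ℝ, 0 ≤ m →
      ENNReal.ofReal m * ENNReal.ofReal (x ^ a) = ENNReal.ofReal (x ^ a * m) :=
    fun x m hm => by rw [← ENNReal.ofReal_mul hm, mul_comm]
  refine lintegral_eq_top_iff_of_le_of_le
    (c := ENNReal.ofReal (min ((1 / 2) ^ b) (1 ^ b)))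
    (C := ENNReal.ofReal (max ((1 / 2) ^ b) (1 ^ b)))
    (by positivity) ENNReal.ofReal_ne_top ?_ ?_
  · filter_upwards [ae_restrict_mem measurableSet_Ioo] with x hx
    rw [h_mul x _ (by positivity)]
    exact ENNReal.ofReal_le_ofReal (mul_le_mul_of_nonneg_left
      (min_rpow_le_rpow_of_mem_Icc (by norm_num) (h_one_sub x hx) b) (Real.rpow_nonneg hx.1.le a))
  · filter_upwards [ae_restrict_mem measurableSet_Ioo] with x hx
    rw [h_mul x _ (by positivity)]
    exact ENNReal.ofReal_le_ofReal (mul_le_mul_of_nonneg_left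
      (rpow_le_max_rpow_of_mem_Icc (by norm_num) (h_one_sub x hx) b) (Real.rpow_nonneg hx.1.le a))

lemma betaLIntegral_eq_add (a b : ℝ) :
    betaLIntegral a b = (∫⁻ x in Ioo 0 (1 / 2), ENNReal.ofReal (x ^ a * (1 - x) ^ b)) +
      ∫⁻ x in Ioo 0 (1 / 2), ENNReal.ofReal (x ^ b * (1 - x) ^ a) := by
  rw [betaLIntegral, ← Ioc_union_Ioo_eq_Ioo (by norm_num : (0 : ℝ) ≤ 1 / 2) (by norm_num),
    lintegral_union measurableSet_Ioo (Ioc_disjoint_Ioi_same.mono_right Ioo_subset_Ioi_self),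
    setLIntegral_congr Ioo_ae_eq_Ioc.symm, ←
    setLIntegral_Ioo_comp_one_sub (fun x => ENNReal.ofReal (x ^ b * (1 - x) ^ a)) 0 (1 / 2)]
  norm_num only [sub_sub_cancel, mul_comm]

lemma betaLIntegral_eq_top_iff (a b : ℝ) : betaLIntegral a b = ⊤ ↔ a ≤ -1 ∨ b ≤ -1 := by
  rw [betaLIntegral_eq_add, ENNReal.add_eq_top, setLIntegral_Ioo_zero_half_eq_top_iff,
    setLIntegral_Ioo_zero_half_eq_top_iff]

lemma betaLIntegral_ne_zero (a b : ℝ) : betaLIntegral a b ≠ 0 := by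
  rw [betaLIntegral, ← pos_iff_ne_zero, setLIntegral_pos_iff (by fun_prop)]
  have h_support : Ioo (0 : ℝ) 1 ⊆
      Function.support (fun x => ENNReal.ofReal (x ^ a * (1 - x) ^ b)) ∩ Ioo 0 1 := by
    refine fun x hx => ⟨?_, hx⟩
    have h1 : 0 < 1 - x := by linarith [hx.2]
    simp only [Function.mem_support, ne_eq, ENNReal.ofReal_eq_zero, not_le]
    exact mul_pos (Real.rpow_pos_of_pos hx.1 a) (Real.rpow_pos_of_pos h1 b)
  exact (by simp : (0 : ℝ≥0∞) < volume (Ioo (0 : ℝ) 1)).trans_le (measure_mono h_support)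

lemma betaLIntegral_mul_eq_top_iff {a b c d : ℝ} (ha : -1 < a) (hc : -1 < c) :
    betaLIntegral a b * betaLIntegral c d = ⊤ ↔ b ≤ -1 ∨ d ≤ -1 := by
  simp only [ENNReal.mul_eq_top, betaLIntegral_eq_top_iff, ne_eq, betaLIntegral_ne_zero,
    not_false_eq_true, true_and, and_true, not_le.2 ha, not_le.2 hc, false_or]
  exact or_comm

lemma setLIntegral_unitSquare_jacobiWeight (a b c d : ℝ) :
    ∫⁻ p : ℝ × ℝ in Ioo 0 1 ×ˢ Ioo 0 1,
      ENNReal.ofReal (p.1 ^ a * (1 - p.1) ^ b * p.2 ^ c * (1 - p.2) ^ d) =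
    betaLIntegral a b * betaLIntegral c d := by
  rw [betaLIntegral, betaLIntegral, ← lintegral_prod_mul (by fun_prop) (by fun_prop),
    Measure.prod_restrict, ← Measure.volume_eq_prod]
  refine setLIntegral_congr_fun (measurableSet_Ioo.prod measurableSet_Ioo) fun p hp => ?_
  have h1 : 0 < 1 - p.1 := by linarith [hp.1.2]
  rw [← ENNReal.ofReal_mul (mul_nonneg (Real.rpow_nonneg hp.1.1.le a) (Real.rpow_nonneg h1.le b))]
  ring_nf

lemma inv_weighted_add_le {τ s u v : ℝ} (hτ0 : 0 < τ) (hτ1 : τ < 1) (hs0 : 0 ≤ s) (hs1 : s ≤ 1)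
    (hu : 0 < u) (hv : 0 < v) :
    (τ * u + (1 - τ) * v)⁻¹ ≤ τ ^ (-s) * (1 - τ) ^ (-(1 - s)) * (u ^ (-s) * v ^ (-(1 - s))) := by
  have h1τ : 0 < 1 - τ := by linarith
  have h_amgm := Real.geom_mean_le_arith_mean2_weighted hs0 (sub_nonneg.2 hs1)
    (mul_pos hτ0 hu).le (mul_pos h1τ hv).le (add_sub_cancel s 1)
  have h_arith : s * (τ * u) + (1 - s) * ((1 - τ) * v) ≤ τ * u + (1 - τ) * v := by
    nlinarith [mul_nonneg (sub_nonneg.2 hs1) (mul_pos hτ0 hu).le,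
      mul_nonneg hs0 (mul_pos h1τ hv).le]
  calc (τ * u + (1 - τ) * v)⁻¹ ≤ ((τ * u) ^ s * ((1 - τ) * v) ^ (1 - s))⁻¹ :=
        inv_anti₀ (by positivity) (h_amgm.trans h_arith)
    _ = _ := by
        rw [Real.mul_rpow hτ0.le hu.le, Real.mul_rpow h1τ.le hv.le, Real.rpow_neg hτ0.le,
          Real.rpow_neg h1τ.le, Real.rpow_neg hu.le, Real.rpow_neg hv.le]
        ring

lemma jacobiWeight_div_le {α β γ δ τ s x y : ℝ} (hτ0 : 0 < τ) (hτ1 : τ < 1) (hs0 : 0 ≤ s)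
    (hs1 : s ≤ 1) (hx : x ∈ Ioo 0 1) (hy : y ∈ Ioo 0 1) :
    x ^ α * (1 - x) ^ β * y ^ γ * (1 - y) ^ δ / (1 - τ * x - (1 - τ) * y) ≤
      τ ^ (-s) * (1 - τ) ^ (-(1 - s)) *
        (x ^ α * (1 - x) ^ (β - s) * y ^ γ * (1 - y) ^ (δ - (1 - s))) := by
  have hu : 0 < 1 - x := by linarith [hx.2]
  have hv : 0 < 1 - y := by linarith [hy.2]
  have h_weight : 0 ≤ x ^ α * (1 - x) ^ β * y ^ γ * (1 - y) ^ δ := by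
    have := hx.1; have := hy.1; positivity
  rw [div_eq_mul_inv, show 1 - τ * x - (1 - τ) * y = τ * (1 - x) + (1 - τ) * (1 - y) by ring,
    sub_eq_add_neg β, sub_eq_add_neg δ, Real.rpow_add hu, Real.rpow_add hv]
  calc _ ≤ x ^ α * (1 - x) ^ β * y ^ γ * (1 - y) ^ δ *
        (τ ^ (-s) * (1 - τ) ^ (-(1 - s)) * ((1 - x) ^ (-s) * (1 - y) ^ (-(1 - s)))) :=
        mul_le_mul_of_nonneg_left (inv_weighted_add_le hτ0 hτ1 hs0 hs1 hu hv) h_weight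
    _ = _ := by ring

lemma setLIntegral_jacobiWeight_div_ne_top {α β γ δ τ : ℝ} (hα : -1 < α) (hγ : -1 < γ)
    (hτ0 : 0 < τ) (hτ1 : τ < 1) (hβ : -1 < β) (hδ : -1 < δ) (hβδ : -1 < β + δ) :
    ∫⁻ p : ℝ × ℝ in Ioo 0 1 ×ˢ Ioo 0 1,
      ENNReal.ofReal (p.1 ^ α * (1 - p.1) ^ β * p.2 ^ γ * (1 - p.2) ^ δ /
        (1 - τ * p.1 - (1 - τ) * p.2)) ≠ ⊤ := by
  obtain ⟨s, hs_lo, hs_hi⟩ : ∃ s, max 0 (-δ) < s ∧ s < min 1 (β + 1) :=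
    exists_between (max_lt (lt_min one_pos (by linarith)) (lt_min (by linarith) (by linarith)))
  rw [max_lt_iff] at hs_lo
  rw [lt_min_iff] at hs_hi
  set C := τ ^ (-s) * (1 - τ) ^ (-(1 - s))
  have h1τ : 0 < 1 - τ := by linarith
  have hC : 0 ≤ C := by positivity
  have h_bound : ∫⁻ p : ℝ × ℝ in Ioo 0 1 ×ˢ Ioo 0 1,
      ENNReal.ofReal (C * (p.1 ^ α * (1 - p.1) ^ (β - s) * p.2 ^ γ * (1 - p.2) ^ (δ - (1 - s)))) =
      ENNReal.ofReal C * (betaLIntegral α (β - s) * betaLIntegral γ (δ - (1 - s))) := by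
    simp_rw [ENNReal.ofReal_mul hC]
    rw [lintegral_const_mul' _ _ ENNReal.ofReal_ne_top, setLIntegral_unitSquare_jacobiWeight]
  refine ne_top_of_le_ne_top ?_ (setLIntegral_mono' (measurableSet_Ioo.prod measurableSet_Ioo)
    fun p hp => ENNReal.ofReal_le_ofReal
      (jacobiWeight_div_le hτ0 hτ1 hs_lo.1.le hs_hi.1.le hp.1 hp.2))
  rw [h_bound]
  refine ENNReal.mul_ne_top ENNReal.ofReal_ne_top ?_
  rw [ne_eq, betaLIntegral_mul_eq_top_iff hα hγ, not_or, not_le, not_le]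
  constructor <;> linarith

lemma exists_pos_mul_le_jacobiWeight_div (α β γ δ : ℝ) {τ : ℝ} (hτ0 : 0 ≤ τ) (hτ1 : τ ≤ 1) :
    ∃ c > 0, ∀ x y : ℝ, 1 / 2 < x → x < y → y < (1 + x) / 2 →
      c * (1 - x) ^ (β + δ - 1) ≤
        x ^ α * (1 - x) ^ β * y ^ γ * (1 - y) ^ δ / (1 - τ * x - (1 - τ) * y) := by
  set mα := min ((1 / 2 : ℝ) ^ α) (1 ^ α)
  set mγ := min ((1 / 2 : ℝ) ^ γ) (1 ^ γ)
  set mδ := min ((1 / 2 : ℝ) ^ δ) (1 ^ δ)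
  refine ⟨mα * mγ * mδ, by positivity, fun x y hx hxy hy => ?_⟩
  set u := 1 - x
  set v := 1 - y
  have hu : 0 < u := by linarith
  have hv : 0 < v := by linarith
  have hxα : mα ≤ x ^ α := min_rpow_le_rpow_of_mem_Icc (by norm_num) ⟨hx.le, by linarith⟩ α
  have hyγ : mγ ≤ y ^ γ := min_rpow_le_rpow_of_mem_Icc (by norm_num) ⟨by linarith, by linarith⟩ γ
  have hvδ : mδ * u ^ δ ≤ v ^ δ := by
    have h := min_rpow_le_rpow_of_mem_Icc (a := 1 / 2 * u) (b := 1 * u) (t := v)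
      (by positivity) ⟨by linarith, by linarith⟩ δ
    rwa [Real.mul_rpow (by norm_num) hu.le, Real.mul_rpow zero_le_one hu.le,
      ← min_mul_of_nonneg _ _ (Real.rpow_nonneg hu.le δ)] at h
  have hx0 : 0 < x := by linarith
  have hy0 : 0 < y := by linarith
  have hD : 0 < 1 - τ * x - (1 - τ) * y := by nlinarith
  have hDu : 1 - τ * x - (1 - τ) * y ≤ u := by nlinarith
  calc mα * mγ * mδ * u ^ (β + δ - 1) = mα * u ^ β * mγ * (mδ * u ^ δ) / u := by
        rw [Real.rpow_sub_one hu.ne', Real.rpow_add hu]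
        ring
    _ ≤ x ^ α * u ^ β * y ^ γ * v ^ δ / u := by gcongr
    _ ≤ x ^ α * u ^ β * y ^ γ * v ^ δ / (1 - τ * x - (1 - τ) * y) := by gcongr

lemma exists_pos_mul_le_lintegral_jacobiWeight_div (α β γ δ : ℝ) {τ : ℝ} (hτ0 : 0 ≤ τ)
    (hτ1 : τ ≤ 1) :
    ∃ c > 0, ∀ x ∈ Ioo (1 / 2 : ℝ) 1, ENNReal.ofReal (c * (1 - x) ^ (β + δ)) ≤
      ∫⁻ y in Ioo 0 1, ENNReal.ofReal
        (x ^ α * (1 - x) ^ β * y ^ γ * (1 - y) ^ δ / (1 - τ * x - (1 - τ) * y)) := by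
  obtain ⟨c, hc, h_point⟩ := exists_pos_mul_le_jacobiWeight_div α β γ δ hτ0 hτ1
  refine ⟨c / 2, half_pos hc, fun x hx => ?_⟩
  have hu : 0 < 1 - x := by linarith [hx.2]
  calc ENNReal.ofReal (c / 2 * (1 - x) ^ (β + δ))
      = ∫⁻ _ in Ioo x ((1 + x) / 2), ENNReal.ofReal (c * (1 - x) ^ (β + δ - 1)) := by
        rw [setLIntegral_const, Real.volume_Ioo, ← ENNReal.ofReal_mul (by positivity),
          Real.rpow_sub_one hu.ne']
        congr 1
        field_simp
        ring
    _ ≤ ∫⁻ y in Ioo x ((1 + x) / 2), ENNReal.ofReal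
          (x ^ α * (1 - x) ^ β * y ^ γ * (1 - y) ^ δ / (1 - τ * x - (1 - τ) * y)) :=
        setLIntegral_mono' measurableSet_Ioo fun y hy =>
          ENNReal.ofReal_le_ofReal (h_point x y hx.1 hy.1 hy.2)
    _ ≤ _ := lintegral_mono_set (Ioo_subset_Ioo (by linarith [hx.1]) (by linarith [hx.2]))

lemma setLIntegral_jacobiWeight_div_eq_top {α β γ δ τ : ℝ} (hτ0 : 0 ≤ τ) (hτ1 : τ ≤ 1)
    (hβδ : β + δ ≤ -1) :
    ∫⁻ p : ℝ × ℝ in Ioo 0 1 ×ˢ Ioo 0 1,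
      ENNReal.ofReal (p.1 ^ α * (1 - p.1) ^ β * p.2 ^ γ * (1 - p.2) ^ δ /
        (1 - τ * p.1 - (1 - τ) * p.2)) = ⊤ := by
  obtain ⟨c, hc, h_inner⟩ := exists_pos_mul_le_lintegral_jacobiWeight_div α β γ δ hτ0 hτ1
  have h_outer : ∫⁻ x in Ioo (1 / 2 : ℝ) 1, ENNReal.ofReal (c * (1 - x) ^ (β + δ)) = ⊤ := by
    have h_refl := setLIntegral_Ioo_comp_one_sub (fun t => ENNReal.ofReal (t ^ (β + δ))) 0 (1 / 2)
    norm_num only at h_refl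
    simp_rw [ENNReal.ofReal_mul hc.le]
    rw [lintegral_const_mul' _ _ ENNReal.ofReal_ne_top, h_refl,
      (setLIntegral_Ioo_rpow_eq_top_iff (by norm_num) _).2 hβδ]
    exact ENNReal.mul_top (ENNReal.ofReal_pos.2 hc).ne'
  rw [Measure.volume_eq_prod, setLIntegral_prod _ (by fun_prop), eq_top_iff, ← h_outer]
  calc _ ≤ _ := setLIntegral_mono' measurableSet_Ioo h_inner
    _ ≤ _ := lintegral_mono_set (Ioo_subset_Ioo (by norm_num) le_rfl)

/-- Recurrence criterion for the discrete-time QBD processes associated with the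
product Jacobi polynomials on the unit square: the Lebesgue integral of the weight
divided by `1 − τx − (1−τ)y` over the open square is infinite iff `β + δ ≤ −1`
(for `0 < τ < 1`), iff `β ≤ 0` when `τ = 1` and iff `δ ≤ 0` when `τ = 0`. -/
theorem stmt_3 (α β γ δ : ℝ) (hα : -1 < α) (hβ : -1 < β) (hγ : -1 < γ) (hδ : -1 < δ) :
    (∀ τ : ℝ, 0 < τ → τ < 1 →
      ((∫⁻ p : ℝ × ℝ in Ioo (0 : ℝ) 1 ×ˢ Ioo (0 : ℝ) 1,
          ENNReal.ofReal (p.1 ^ α * (1 - p.1) ^ β * p.2 ^ γ * (1 - p.2) ^ δ /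
            (1 - τ * p.1 - (1 - τ) * p.2))) = ⊤ ↔ β + δ ≤ -1)) ∧
    ((∫⁻ p : ℝ × ℝ in Ioo (0 : ℝ) 1 ×ˢ Ioo (0 : ℝ) 1,
        ENNReal.ofReal (p.1 ^ α * (1 - p.1) ^ (β - 1) * p.2 ^ γ * (1 - p.2) ^ δ)) = ⊤
      ↔ β ≤ 0) ∧
    ((∫⁻ p : ℝ × ℝ in Ioo (0 : ℝ) 1 ×ˢ Ioo (0 : ℝ) 1,
        ENNReal.ofReal (p.1 ^ α * (1 - p.1) ^ β * p.2 ^ γ * (1 - p.2) ^ (δ - 1))) = ⊤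
      ↔ δ ≤ 0) := by
  refine ⟨fun τ hτ0 hτ1 =>
    ⟨fun h => ?_, setLIntegral_jacobiWeight_div_eq_top hτ0.le hτ1.le⟩, ?_, ?_⟩
  · by_contra hβδ
    exact setLIntegral_jacobiWeight_div_ne_top hα hγ hτ0 hτ1 hβ hδ (not_le.1 hβδ) h
  · rw [setLIntegral_unitSquare_jacobiWeight, betaLIntegral_mul_eq_top_iff hα hγ,
      or_iff_left (not_le.2 hδ)]
    constructor <;> intro h <;> linarith
  · rw [setLIntegral_unitSquare_jacobiWeight, betaLIntegral_mul_eq_top_iff hα hγ,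
      or_iff_right (not_le.2 hβ)]
    constructor <;> intro h <;> linarith
end

section
/- Let α, β > −1 be real numbers and let C = (0,∞)×(0,∞). (i) For every τ₁ > 0 and τ₂ > 0, the integral ∫_C x^α y^β e^{−x−y} / (τ₁x + τ₂y) dx dy is infinite if and only if α + β ≤ −1. (ii) For τ₁ = 0 and τ₂ > 0, the integral ∫_C x^α y^{β−1} e^{−x−y} dx dy is infinite if and only if β ≤ 0; symmetrically for τ₂ = 0, τ₁ > 0 it is infinite if and only if α ≤ 0. -/
/-!
Near the origin the weight `x^α y^β / (τ₁x + τ₂y)` is homogeneous of degree `α + β - 1`, so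
the integral converges iff `α + β > -1`. For the upper bound, weighted AM-GM gives
`τ₁x + τ₂y ≥ min τ₁ τ₂ · x^θ y^(1-θ)` with `θ = (α+1)/(α+β+2)`, which dominates the integrand
by a product of two convergent Gamma integrands. For the lower bound, on the triangle
`0 < x < y` the integrand is at least a constant times `x^α y^(β-1) e^{-2y}`, whose inner
integral in `x` leaves `y^(α+β) e^{-2y}`. Parts (ii) and (iii) factor into two Gamma integrals.
-/

open MeasureTheory Set Real

theorem integrableOn_rpow_mul_exp_neg_mul_Ioi_iff {s c : ℝ} (hc : 0 < c) :
    IntegrableOn (fun x : ℝ => x ^ s * exp (-(c * x))) (Ioi 0) ↔ -1 < s := by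
  refine ⟨fun h => ?_, fun hs => by
    simpa using integrableOn_rpow_mul_exp_neg_mul_rpow hs one_pos hc⟩
  have h01 : IntegrableOn (fun x : ℝ => exp c * (x ^ s * exp (-(c * x)))) (Ioo 0 1) :=
    (h.mono_set Ioo_subset_Ioi_self).const_mul _
  rw [← intervalIntegral.integrableOn_Ioo_rpow_iff zero_lt_one]
  refine h01.mono' (by fun_prop) ?_
  filter_upwards [ae_restrict_mem measurableSet_Ioo] with x hx
  rw [norm_of_nonneg (rpow_nonneg hx.1.le s), mul_left_comm, ← exp_add]
  exact le_mul_of_one_le_right (rpow_nonneg hx.1.le s) (one_le_exp (by nlinarith [hx.2]))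

theorem lintegral_rpow_mul_exp_neg_mul_Ioi_eq_top_iff {s c : ℝ} (hc : 0 < c) :
    ∫⁻ x in Ioi 0, ENNReal.ofReal (x ^ s * exp (-(c * x))) = ⊤ ↔ s ≤ -1 := by
  have hnonneg : 0 ≤ᵐ[volume.restrict (Ioi 0)] fun x : ℝ => x ^ s * exp (-(c * x)) := by
    filter_upwards [ae_restrict_mem measurableSet_Ioi] with x hx
    exact mul_nonneg (rpow_nonneg hx.le s) (exp_nonneg _)
  rw [← not_lt, ← integrableOn_rpow_mul_exp_neg_mul_Ioi_iff hc, IntegrableOn,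
    ← lintegral_ofReal_ne_top_iff_integrable (by fun_prop) hnonneg, not_not]

theorem lintegral_rpow_mul_exp_neg_mul_Ioi_ne_zero (s c : ℝ) :
    ∫⁻ x in Ioi 0, ENNReal.ofReal (x ^ s * exp (-(c * x))) ≠ 0 := by
  rw [Ne, lintegral_eq_zero_iff (by fun_prop)]
  intro h
  have : (ae (volume.restrict (Ioi (0 : ℝ)))).NeBot := ae_restrict_neBot.2 (by simp)
  obtain ⟨x, hx, hx0⟩ := (h.and (ae_restrict_mem measurableSet_Ioi)).exists
  exact (ENNReal.ofReal_pos.2 (mul_pos (rpow_pos_of_pos hx0 s) (exp_pos _))).ne' hx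

theorem setLIntegral_prod_mul {α β : Type*} [MeasurableSpace α] [MeasurableSpace β]
    {μ : Measure α} {ν : Measure β} [SFinite μ] [SFinite ν] {s : Set α} {t : Set β}
    {f : α → ENNReal} {g : β → ENNReal} (hf : AEMeasurable f (μ.restrict s))
    (hg : AEMeasurable g (ν.restrict t)) :
    ∫⁻ z in s ×ˢ t, f z.1 * g z.2 ∂μ.prod ν = (∫⁻ x in s, f x ∂μ) * ∫⁻ y in t, g y ∂ν := by
  rw [← Measure.prod_restrict, lintegral_prod_mul hf hg]

theorem lintegral_Ioi_prod_Ioi_rpow_mul_exp_eq_top_iff (a b : ℝ) :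
    ∫⁻ p : ℝ × ℝ in Ioi 0 ×ˢ Ioi 0, ENNReal.ofReal (p.1 ^ a * p.2 ^ b * exp (-p.1 - p.2)) = ⊤
      ↔ a ≤ -1 ∨ b ≤ -1 := by
  have hfactor : ∫⁻ p : ℝ × ℝ in Ioi 0 ×ˢ Ioi 0,
      ENNReal.ofReal (p.1 ^ a * p.2 ^ b * exp (-p.1 - p.2)) =
      (∫⁻ x in Ioi 0, ENNReal.ofReal (x ^ a * exp (-(1 * x)))) *
        ∫⁻ y in Ioi 0, ENNReal.ofReal (y ^ b * exp (-(1 * y))) := by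
    rw [Measure.volume_eq_prod, ← setLIntegral_prod_mul (by fun_prop) (by fun_prop)]
    refine setLIntegral_congr_fun (measurableSet_Ioi.prod measurableSet_Ioi) fun p hp => ?_
    rw [← ENNReal.ofReal_mul (mul_nonneg (rpow_nonneg hp.1.le a) (exp_nonneg _)),
      sub_eq_add_neg, exp_add]
    ring_nf
  rw [hfactor, ENNReal.mul_eq_top, lintegral_rpow_mul_exp_neg_mul_Ioi_eq_top_iff one_pos,
    lintegral_rpow_mul_exp_neg_mul_Ioi_eq_top_iff one_pos]
  simp only [ne_eq, lintegral_rpow_mul_exp_neg_mul_Ioi_ne_zero, not_false_eq_true, true_and,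
    and_true]
  exact or_comm

theorem rpow_mul_rpow_one_sub_le_add {x y θ : ℝ} (hx : 0 ≤ x) (hy : 0 ≤ y) (hθ₀ : 0 ≤ θ)
    (hθ₁ : θ ≤ 1) : x ^ θ * y ^ (1 - θ) ≤ x + y :=
  calc x ^ θ * y ^ (1 - θ) ≤ θ * x + (1 - θ) * y :=
        geom_mean_le_arith_mean2_weighted hθ₀ (by linarith) hx hy (by ring)
    _ ≤ x + y := by nlinarith

theorem rpow_mul_rpow_mul_exp_div_le {α β θ τ₁ τ₂ x y : ℝ} (hx : 0 < x) (hy : 0 < y)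
    (hθ₀ : 0 ≤ θ) (hθ₁ : θ ≤ 1) (hτ₁ : 0 < τ₁) (hτ₂ : 0 < τ₂) :
    x ^ α * y ^ β * exp (-x - y) / (τ₁ * x + τ₂ * y) ≤
      (min τ₁ τ₂)⁻¹ * (x ^ (α - θ) * y ^ (β - (1 - θ)) * exp (-x - y)) := by
  have hm : 0 < min τ₁ τ₂ := lt_min hτ₁ hτ₂
  have hD : min τ₁ τ₂ * (x ^ θ * y ^ (1 - θ)) ≤ τ₁ * x + τ₂ * y :=
    calc min τ₁ τ₂ * (x ^ θ * y ^ (1 - θ)) ≤ min τ₁ τ₂ * (x + y) :=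
          mul_le_mul_of_nonneg_left (rpow_mul_rpow_one_sub_le_add hx.le hy.le hθ₀ hθ₁) hm.le
      _ ≤ τ₁ * x + τ₂ * y := by nlinarith [min_le_left τ₁ τ₂, min_le_right τ₁ τ₂]
  have hsplit : x ^ α * y ^ β = x ^ (α - θ) * y ^ (β - (1 - θ)) * (x ^ θ * y ^ (1 - θ)) := by
    rw [rpow_sub hx, rpow_sub hy]
    field_simp
  rw [hsplit, div_le_iff₀ (by positivity)]
  calc x ^ (α - θ) * y ^ (β - (1 - θ)) * (x ^ θ * y ^ (1 - θ)) * exp (-x - y)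
      = (min τ₁ τ₂)⁻¹ * (x ^ (α - θ) * y ^ (β - (1 - θ)) * exp (-x - y)) *
          (min τ₁ τ₂ * (x ^ θ * y ^ (1 - θ))) := by field_simp
    _ ≤ _ := mul_le_mul_of_nonneg_left hD (by positivity)

theorem lintegral_rpow_mul_exp_div_lt_top {α β τ₁ τ₂ : ℝ} (hα : -1 < α) (hβ : -1 < β)
    (hαβ : -1 < α + β) (hτ₁ : 0 < τ₁) (hτ₂ : 0 < τ₂) :
    ∫⁻ p : ℝ × ℝ in Ioi 0 ×ˢ Ioi 0,
      ENNReal.ofReal (p.1 ^ α * p.2 ^ β * exp (-p.1 - p.2) / (τ₁ * p.1 + τ₂ * p.2)) < ⊤ := by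
  set θ := (α + 1) / (α + β + 2)
  have hD : 0 < α + β + 2 := by linarith
  have hθ₀ : 0 ≤ θ := div_nonneg (by linarith) hD.le
  have hθ₁ : θ ≤ 1 := (div_le_one hD).2 (by linarith)
  have hαθ : -1 < α - θ := by
    have : θ < α + 1 := div_lt_self (by linarith) (by linarith)
    linarith
  have hβθ : -1 < β - (1 - θ) := by
    have hθ' : 1 - θ = (β + 1) / (α + β + 2) := by simp only [θ]; field_simp; ring
    have : 1 - θ < β + 1 := hθ' ▸ div_lt_self (by linarith) (by linarith)
    linarith
  have hfin : ∫⁻ p : ℝ × ℝ in Ioi 0 ×ˢ Ioi 0,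
      ENNReal.ofReal (p.1 ^ (α - θ) * p.2 ^ (β - (1 - θ)) * exp (-p.1 - p.2)) ≠ ⊤ := by
    rw [Ne, lintegral_Ioi_prod_Ioi_rpow_mul_exp_eq_top_iff]
    push Not
    exact ⟨hαθ, hβθ⟩
  calc _ ≤ ∫⁻ p : ℝ × ℝ in Ioi 0 ×ˢ Ioi 0, ENNReal.ofReal (min τ₁ τ₂)⁻¹ *
        ENNReal.ofReal (p.1 ^ (α - θ) * p.2 ^ (β - (1 - θ)) * exp (-p.1 - p.2)) := by
        refine setLIntegral_mono (by fun_prop) fun p hp => ?_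
        rw [← ENNReal.ofReal_mul (inv_nonneg.2 (lt_min hτ₁ hτ₂).le)]
        exact ENNReal.ofReal_le_ofReal
          (rpow_mul_rpow_mul_exp_div_le hp.1 hp.2 hθ₀ hθ₁ hτ₁ hτ₂)
    _ < ⊤ := by
        rw [lintegral_const_mul' _ _ ENNReal.ofReal_ne_top]
        exact ENNReal.mul_lt_top ENNReal.ofReal_lt_top hfin.lt_top

theorem lintegral_Ioo_zero_rpow {a y : ℝ} (ha : -1 < a) (hy : 0 < y) :
    ∫⁻ x in Ioo 0 y, ENNReal.ofReal (x ^ a) = ENNReal.ofReal (y ^ (a + 1) / (a + 1)) := by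
  have hint : IntegrableOn (fun x : ℝ => x ^ a) (Ioo 0 y) :=
    (intervalIntegral.integrableOn_Ioo_rpow_iff hy).2 ha
  have hnonneg : 0 ≤ᵐ[volume.restrict (Ioo 0 y)] fun x : ℝ => x ^ a := by
    filter_upwards [ae_restrict_mem measurableSet_Ioo] with x hx
    exact rpow_nonneg hx.1.le a
  rw [← ofReal_integral_eq_lintegral_ofReal hint hnonneg, ← integral_Ioc_eq_integral_Ioo,
    ← intervalIntegral.integral_of_le hy.le, integral_rpow (Or.inl ha),
    zero_rpow (by linarith), sub_zero]

theorem le_rpow_mul_rpow_mul_exp_div_of_lt {α β τ₁ τ₂ x y : ℝ} (hx : 0 < x) (hxy : x < y)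
    (hτ₁ : 0 ≤ τ₁) (hτ₂ : 0 < τ₂) :
    x ^ α * (y ^ (β - 1) * exp (-(2 * y)) / (τ₁ + τ₂)) ≤
      x ^ α * y ^ β * exp (-x - y) / (τ₁ * x + τ₂ * y) := by
  have hy : 0 < y := hx.trans hxy
  have hexp : exp (-(2 * y)) / ((τ₁ + τ₂) * y) ≤ exp (-x - y) / (τ₁ * x + τ₂ * y) :=
    div_le_div₀ (exp_nonneg _) (exp_le_exp.2 (by linarith)) (by positivity)
      (by nlinarith [mul_le_mul_of_nonneg_left hxy.le hτ₁])
  calc x ^ α * (y ^ (β - 1) * exp (-(2 * y)) / (τ₁ + τ₂))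
      = x ^ α * (y ^ β * (exp (-(2 * y)) / ((τ₁ + τ₂) * y))) := by
        rw [rpow_sub_one hy.ne']
        field_simp
    _ ≤ x ^ α * (y ^ β * (exp (-x - y) / (τ₁ * x + τ₂ * y))) := by gcongr
    _ = _ := by ring

theorem lintegral_rpow_mul_exp_div_eq_top {α β τ₁ τ₂ : ℝ} (hα : -1 < α) (hαβ : α + β ≤ -1)
    (hτ₁ : 0 ≤ τ₁) (hτ₂ : 0 < τ₂) :
    ∫⁻ p : ℝ × ℝ in Ioi 0 ×ˢ Ioi 0,
      ENNReal.ofReal (p.1 ^ α * p.2 ^ β * exp (-p.1 - p.2) / (τ₁ * p.1 + τ₂ * p.2)) = ⊤ := by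
  set K := ((α + 1) * (τ₁ + τ₂))⁻¹
  have hK : 0 < K := inv_pos.2 (mul_pos (by linarith) (by linarith))
  have hinner : ∀ y ∈ Ioi (0 : ℝ), ENNReal.ofReal (K * (y ^ (α + β) * exp (-(2 * y)))) ≤
      ∫⁻ x in Ioi 0, ENNReal.ofReal
        (x ^ α * y ^ β * exp (-x - y) / (τ₁ * x + τ₂ * y)) := by
    intro y hy
    calc ENNReal.ofReal (K * (y ^ (α + β) * exp (-(2 * y))))
        = ∫⁻ x in Ioo 0 y, ENNReal.ofReal (x ^ α) *
            ENNReal.ofReal (y ^ (β - 1) * exp (-(2 * y)) / (τ₁ + τ₂)) := by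
          rw [lintegral_mul_const' _ _ ENNReal.ofReal_ne_top, lintegral_Ioo_zero_rpow hα hy,
            ← ENNReal.ofReal_mul (div_nonneg (rpow_nonneg hy.le _) (by linarith))]
          have : y ^ (α + β) = y ^ (α + 1) * y ^ (β - 1) := by
            rw [← rpow_add hy]
            ring_nf
          rw [this]
          congr 1
          simp only [K, mul_inv]
          ring
      _ ≤ ∫⁻ x in Ioo 0 y, ENNReal.ofReal
            (x ^ α * y ^ β * exp (-x - y) / (τ₁ * x + τ₂ * y)) := by
          refine setLIntegral_mono (by fun_prop) fun x hx => ?_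
          rw [← ENNReal.ofReal_mul (rpow_nonneg hx.1.le _)]
          exact ENNReal.ofReal_le_ofReal (le_rpow_mul_rpow_mul_exp_div_of_lt hx.1 hx.2 hτ₁ hτ₂)
      _ ≤ _ := lintegral_mono_set Ioo_subset_Ioi_self
  have htop : ∫⁻ y in Ioi 0, ENNReal.ofReal (y ^ (α + β) * exp (-(2 * y))) = ⊤ :=
    (lintegral_rpow_mul_exp_neg_mul_Ioi_eq_top_iff two_pos).2 hαβ
  rw [Measure.volume_eq_prod, setLIntegral_prod_symm _ (by fun_prop), eq_top_iff]
  calc ⊤ = ∫⁻ y in Ioi 0, ENNReal.ofReal (K * (y ^ (α + β) * exp (-(2 * y)))) := by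
        simp_rw [ENNReal.ofReal_mul hK.le]
        rw [lintegral_const_mul' _ _ ENNReal.ofReal_ne_top, htop,
          ENNReal.mul_top (ENNReal.ofReal_pos.2 hK).ne']
    _ ≤ _ := setLIntegral_mono' measurableSet_Ioi hinner

theorem lintegral_rpow_mul_exp_div_eq_top_iff {α β τ₁ τ₂ : ℝ} (hα : -1 < α) (hβ : -1 < β)
    (hτ₁ : 0 < τ₁) (hτ₂ : 0 < τ₂) :
    ∫⁻ p : ℝ × ℝ in Ioi 0 ×ˢ Ioi 0,
      ENNReal.ofReal (p.1 ^ α * p.2 ^ β * exp (-p.1 - p.2) / (τ₁ * p.1 + τ₂ * p.2)) = ⊤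
      ↔ α + β ≤ -1 :=
  ⟨fun h => not_lt.1 fun hαβ => (lintegral_rpow_mul_exp_div_lt_top hα hβ hαβ hτ₁ hτ₂).ne h,
    fun hαβ => lintegral_rpow_mul_exp_div_eq_top hα hαβ hτ₁.le hτ₂⟩

/-- Recurrence criterion for the continuous-time QBD processes associated with the
product Laguerre polynomials on the quadrant: the Lebesgue integral of the weight
`x^α y^β e^{−x−y}` divided by `τ₁x + τ₂y` over `(0,∞)²` is infinite iff
`α + β ≤ −1` (for `τ₁, τ₂ > 0`); when `τ₁ = 0, τ₂ > 0` it is infinite iff `β ≤ 0`,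
and when `τ₂ = 0, τ₁ > 0` it is infinite iff `α ≤ 0`. -/
theorem stmt_4 (α β : ℝ) (hα : -1 < α) (hβ : -1 < β) :
    (∀ τ₁ τ₂ : ℝ, 0 < τ₁ → 0 < τ₂ →
      ((∫⁻ p : ℝ × ℝ in Ioi (0 : ℝ) ×ˢ Ioi (0 : ℝ),
          ENNReal.ofReal (p.1 ^ α * p.2 ^ β * Real.exp (-p.1 - p.2) /
            (τ₁ * p.1 + τ₂ * p.2))) = ⊤ ↔ α + β ≤ -1)) ∧
    ((∫⁻ p : ℝ × ℝ in Ioi (0 : ℝ) ×ˢ Ioi (0 : ℝ),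
        ENNReal.ofReal (p.1 ^ α * p.2 ^ (β - 1) * Real.exp (-p.1 - p.2))) = ⊤
      ↔ β ≤ 0) ∧
    ((∫⁻ p : ℝ × ℝ in Ioi (0 : ℝ) ×ˢ Ioi (0 : ℝ),
        ENNReal.ofReal (p.1 ^ (α - 1) * p.2 ^ β * Real.exp (-p.1 - p.2))) = ⊤
      ↔ α ≤ 0) := by
  refine ⟨fun τ₁ τ₂ hτ₁ hτ₂ => lintegral_rpow_mul_exp_div_eq_top_iff hα hβ hτ₁ hτ₂, ?_, ?_⟩
  · rw [lintegral_Ioi_prod_Ioi_rpow_mul_exp_eq_top_iff, or_iff_right hα.not_ge]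
    exact ⟨fun h => by linarith, fun h => by linarith⟩
  · rw [lintegral_Ioi_prod_Ioi_rpow_mul_exp_eq_top_iff, or_iff_left hβ.not_ge]
    exact ⟨fun h => by linarith, fun h => by linarith⟩
end

section
/- Let α > −1 and β > −1/2 be real numbers. For integers n ≥ 1 and 0 ≤ k ≤ n define a_{n,k} = (n−k+α+1)(n+α+β+3/2)/((2n−k+α+β+3/2)(2n−k+α+β+5/2)), c_{n,k} = (n−k)(n+β+1/2)/((2n−k+α+β+1/2)(2n−k+α+β+3/2)), and b_{n,k} = (n−k+1)(n−k+α+1)/((2n−k+α+β+3/2)(2n−k+α+β+5/2)) + (n+α+β+1/2)(n+β+1/2)/((2n−k+α+β+1/2)(2n−k+α+β+3/2)). Then for all n ≥ 1 and 0 ≤ k ≤ n: a_{n,k} ≥ 0, b_{n,k} ≥ 0, c_{n,k} ≥ 0 and a_{n,k} + b_{n,k} + c_{n,k} = 1. -/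
/-! With `D = 2n - k + α + β + 3/2`, the entry `b` splits into a part sharing the denominator
`D (D + 1)` of `a` and a part sharing the denominator `(D - 1) D` of `c`. Each pair telescopes:
`a + b' = (n - k + α + 1) / D` and `b'' + c = (n + β + 1/2) / D`, and the two numerators add up
to `D`. -/

theorem mul_div_add_mul_div_eq_div {K : Type*} [Field K] {u v w d e : K} (he : e ≠ 0)
    (h : v + w = e) : u * v / (d * e) + u * w / (d * e) = u / d := by
  rw [← add_div, ← mul_add, h, mul_div_mul_right _ _ he]

theorem div_mul_add_div_mul_eq_div {K : Type*} [Field K] {u v w d e : K} (he : e ≠ 0)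
    (h : v + w = e) : v * u / (e * d) + w * u / (e * d) = u / d := by
  rw [← add_div, ← add_mul, h, mul_div_mul_left _ _ he]

noncomputable section

namespace ParabolicJacobi

variable (α β n k : ℝ)

def a : ℝ :=
  (n - k + α + 1) * (n + α + β + 3 / 2)
    / ((2 * n - k + α + β + 3 / 2) * (2 * n - k + α + β + 5 / 2))

def b : ℝ :=
  (n - k + 1) * (n - k + α + 1) / ((2 * n - k + α + β + 3 / 2) * (2 * n - k + α + β + 5 / 2))
    + (n + α + β + 1 / 2) * (n + β + 1 / 2)
      / ((2 * n - k + α + β + 1 / 2) * (2 * n - k + α + β + 3 / 2))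

def c : ℝ :=
  (n - k) * (n + β + 1 / 2) / ((2 * n - k + α + β + 1 / 2) * (2 * n - k + α + β + 3 / 2))

variable {α β n k}

theorem a_add_b_add_c (hD : 0 < 2 * n - k + α + β + 1 / 2) :
    a α β n k + b α β n k + c α β n k = 1 := by
  have h₀ : 2 * n - k + α + β + 1 / 2 ≠ 0 := hD.ne'
  have h₁ : 2 * n - k + α + β + 3 / 2 ≠ 0 := by linarith
  have h₂ : 2 * n - k + α + β + 5 / 2 ≠ 0 := by linarith
  have upper : a α β n k + (n - k + 1) * (n - k + α + 1)
        / ((2 * n - k + α + β + 3 / 2) * (2 * n - k + α + β + 5 / 2))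
      = (n - k + α + 1) / (2 * n - k + α + β + 3 / 2) := by
    rw [a, mul_comm (n - k + 1)]
    exact mul_div_add_mul_div_eq_div h₂ (by ring)
  have lower : (n + α + β + 1 / 2) * (n + β + 1 / 2)
        / ((2 * n - k + α + β + 1 / 2) * (2 * n - k + α + β + 3 / 2)) + c α β n k
      = (n + β + 1 / 2) / (2 * n - k + α + β + 3 / 2) :=
    div_mul_add_div_mul_eq_div h₀ (by ring)
  calc a α β n k + b α β n k + c α β n k
      = (n - k + α + 1) / (2 * n - k + α + β + 3 / 2)
        + (n + β + 1 / 2) / (2 * n - k + α + β + 3 / 2) := by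
        rw [← upper, ← lower, b]
        ring
    _ = 1 := by
        rw [← add_div, div_eq_one_iff_eq h₁]
        ring

theorem a_nonneg (hα : -1 < α) (hβ : -(1 / 2 : ℝ) < β) (hk : k ≤ n) (hn : 0 ≤ n) :
    0 ≤ a α β n k := by
  unfold a
  apply div_nonneg <;> nlinarith

theorem b_nonneg (hα : -1 < α) (hβ : -(1 / 2 : ℝ) < β) (hk : k ≤ n) (hn : 1 ≤ n) :
    0 ≤ b α β n k := by
  unfold b
  apply add_nonneg <;> apply div_nonneg <;> nlinarith

theorem c_nonneg (hα : -1 < α) (hβ : -(1 / 2 : ℝ) < β) (hk : k ≤ n) (hn : 1 ≤ n) :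
    0 ≤ c α β n k := by
  unfold c
  apply div_nonneg <;> nlinarith

end ParabolicJacobi

end

/-- The diagonal entries of the blocks of the first Jacobi matrix `J₁` of the
orthogonal polynomials on the parabolic domain (normalized at `(1,1)`) are
nonnegative and each row sums to one: `J₁` is a stochastic matrix. -/
theorem stmt_6 (α β : ℝ) (hα : -1 < α) (hβ : -(1 / 2 : ℝ) < β)
    (a b c : ℕ → ℕ → ℝ)
    (ha : ∀ n k, a n k = ((n : ℝ) - k + α + 1) * ((n : ℝ) + α + β + 3 / 2)
      / ((2 * (n : ℝ) - k + α + β + 3 / 2) * (2 * (n : ℝ) - k + α + β + 5 / 2)))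
    (hc : ∀ n k, c n k = ((n : ℝ) - k) * ((n : ℝ) + β + 1 / 2)
      / ((2 * (n : ℝ) - k + α + β + 1 / 2) * (2 * (n : ℝ) - k + α + β + 3 / 2)))
    (hb : ∀ n k, b n k = ((n : ℝ) - k + 1) * ((n : ℝ) - k + α + 1)
      / ((2 * (n : ℝ) - k + α + β + 3 / 2) * (2 * (n : ℝ) - k + α + β + 5 / 2))
      + ((n : ℝ) + α + β + 1 / 2) * ((n : ℝ) + β + 1 / 2)
      / ((2 * (n : ℝ) - k + α + β + 1 / 2) * (2 * (n : ℝ) - k + α + β + 3 / 2))) :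
    ∀ n k : ℕ, 1 ≤ n → k ≤ n →
      0 ≤ a n k ∧ 0 ≤ b n k ∧ 0 ≤ c n k ∧ a n k + b n k + c n k = 1 := by
  intro n k hn hk
  have hn : (1 : ℝ) ≤ n := by exact_mod_cast hn
  have hk : (k : ℝ) ≤ n := by exact_mod_cast hk
  rw [ha, hb, hc]
  exact ⟨ParabolicJacobi.a_nonneg hα hβ hk (by linarith), ParabolicJacobi.b_nonneg hα hβ hk hn,
    ParabolicJacobi.c_nonneg hα hβ hk hn, ParabolicJacobi.a_add_b_add_c (by linarith)⟩
end

section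
/- Let α > −1 and β > −1/2 be real numbers. For integers n ≥ 0 and 0 ≤ k ≤ n define a^{(3)}_{n,k} = (k+2β+1)(n+α+β+3/2)/((2k+2β+1)(2n−k+α+β+3/2)), b^{(1)}_{n,k} = k(n−k+α+1)/((2k+2β+1)(2n−k+α+β+3/2)), b^{(3)}_{n,k} = (k+2β+1)(n−k)/((2k+2β+1)(2n−k+α+β+3/2)), and c^{(1)}_{n,k} = k(n+β+1/2)/((2k+2β+1)(2n−k+α+β+3/2)). Then for all n ≥ 0 and 0 ≤ k ≤ n: each of these four quantities is nonnegative and a^{(3)}_{n,k} + b^{(1)}_{n,k} + b^{(3)}_{n,k} + c^{(1)}_{n,k} = 1. -/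
/-!
Every entry is a quotient of products of factors that are positive once `k ≤ n`, `α > -1` and
`β > -1/2`. For the row sum, pair `a³` with `b³` and `b¹` with `c¹`: their numerators add up to
`(k + 2β + 1) · D` and `k · D` with `D = 2n - k + α + β + 3/2`, so the row sum is
`((k + 2β + 1) + k) / (2k + 2β + 1) = 1`.
-/

section ParabolicJacobi

variable {α β : ℝ}

lemma parabolic_leftDenom_pos (hβ : -(1 / 2 : ℝ) < β) (k : ℕ) :
    0 < 2 * (k : ℝ) + 2 * β + 1 := by
  have : (0 : ℝ) ≤ k := k.cast_nonneg
  linarith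

lemma parabolic_rightDenom_pos (hα : -1 < α) (hβ : -(1 / 2 : ℝ) < β) {n k : ℕ} (hkn : k ≤ n) :
    0 < 2 * (n : ℝ) - k + α + β + 3 / 2 := by
  have : (k : ℝ) ≤ n := by exact_mod_cast hkn
  have : (0 : ℝ) ≤ k := k.cast_nonneg
  linarith

lemma parabolic_numerators_sum (n k : ℝ) :
    (k + 2 * β + 1) * (n + α + β + 3 / 2) + k * (n - k + α + 1) + (k + 2 * β + 1) * (n - k)
        + k * (n + β + 1 / 2) =
      (2 * k + 2 * β + 1) * (2 * n - k + α + β + 3 / 2) := by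
  ring

end ParabolicJacobi

/-- The nonzero entries in row `(n,k)` of the second Jacobi matrix `J₂` of the
orthogonal polynomials on the parabolic domain (normalized at `(1,1)`) are
nonnegative and sum to one: `J₂` is a stochastic matrix. -/
theorem stmt_7 (α β : ℝ) (hα : -1 < α) (hβ : -(1 / 2 : ℝ) < β)
    (a3 b1 b3 c1 : ℕ → ℕ → ℝ)
    (ha3 : ∀ n k, a3 n k = ((k : ℝ) + 2 * β + 1) * ((n : ℝ) + α + β + 3 / 2)
      / ((2 * (k : ℝ) + 2 * β + 1) * (2 * (n : ℝ) - k + α + β + 3 / 2)))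
    (hb1 : ∀ n k, b1 n k = (k : ℝ) * ((n : ℝ) - k + α + 1)
      / ((2 * (k : ℝ) + 2 * β + 1) * (2 * (n : ℝ) - k + α + β + 3 / 2)))
    (hb3 : ∀ n k, b3 n k = ((k : ℝ) + 2 * β + 1) * ((n : ℝ) - k)
      / ((2 * (k : ℝ) + 2 * β + 1) * (2 * (n : ℝ) - k + α + β + 3 / 2)))
    (hc1 : ∀ n k, c1 n k = (k : ℝ) * ((n : ℝ) + β + 1 / 2)
      / ((2 * (k : ℝ) + 2 * β + 1) * (2 * (n : ℝ) - k + α + β + 3 / 2))) :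
    ∀ n k : ℕ, k ≤ n →
      0 ≤ a3 n k ∧ 0 ≤ b1 n k ∧ 0 ≤ b3 n k ∧ 0 ≤ c1 n k ∧
      a3 n k + b1 n k + b3 n k + c1 n k = 1 := by
  intro n k hkn
  have hkn' : (k : ℝ) ≤ n := by exact_mod_cast hkn
  have hk : (0 : ℝ) ≤ k := k.cast_nonneg
  have hD : 0 < (2 * (k : ℝ) + 2 * β + 1) * (2 * (n : ℝ) - k + α + β + 3 / 2) :=
    mul_pos (parabolic_leftDenom_pos hβ k) (parabolic_rightDenom_pos hα hβ hkn)
  refine ⟨?_, ?_, ?_, ?_, ?_⟩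
  · rw [ha3]; exact div_nonneg (mul_nonneg (by linarith) (by linarith)) hD.le
  · rw [hb1]; exact div_nonneg (mul_nonneg hk (by linarith)) hD.le
  · rw [hb3]; exact div_nonneg (mul_nonneg (by linarith) (by linarith)) hD.le
  · rw [hc1]; exact div_nonneg (mul_nonneg hk (by linarith)) hD.le
  · rw [ha3, hb1, hb3, hc1, ← add_div, ← add_div, ← add_div, div_eq_one_iff_eq hD.ne']
    exact parabolic_numerators_sum n k
end

section
/- Let α > −1 and β > −1/2 be real numbers. For integers n ≥ 0 and 0 ≤ k ≤ n define Π_{n,k} = √π·(2k+2β+1)(2n−k+α+β+3/2)·Γ(n+α+β+3/2)·Γ(k+2β+1)·Γ(n−k+α+1) / (2^{2β+1}·Γ(n+β+3/2)·Γ(α+β+5/2)·Γ(α+1)·Γ(β+1)·(n−k)!·k!), and define a_{n,k} = (n−k+α+1)(n+α+β+3/2)/((2n−k+α+β+3/2)(2n−k+α+β+5/2)), c_{n,k} = (n−k)(n+β+1/2)/((2n−k+α+β+1/2)(2n−k+α+β+3/2)), a^{(3)}_{n,k} = (k+2β+1)(n+α+β+3/2)/((2k+2β+1)(2n−k+α+β+3/2)),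 c^{(1)}_{n,k} = k(n+β+1/2)/((2k+2β+1)(2n−k+α+β+3/2)). Then for all n ≥ 0 and 0 ≤ k ≤ n: Π_{n,k}·a_{n,k} = c_{n+1,k}·Π_{n+1,k} and Π_{n,k}·a^{(3)}_{n,k} = c^{(1)}_{n+1,k+1}·Π_{n+1,k+1}. -/
/-!
Π_{n,k} is a product of Gamma values and factorials, so moving from `(n, k)` to `(n + 1, k)` or to
`(n + 1, k + 1)` multiplies it by an explicit rational factor, read off from `Γ(x + 1) = x Γ(x)`.
Both identities then reduce to rational-function identities: `c_{n+1,k}` times the first factor is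
`a_{n,k}`, and `c^{(1)}_{n+1,k+1}` times the second is `a^{(3)}_{n,k}`.
-/

open Real

noncomputable def parabolicPi (α β : ℝ) (n k : ℕ) : ℝ :=
  √π * (2 * (k : ℝ) + 2 * β + 1) * (2 * (n : ℝ) - k + α + β + 3 / 2)
      * Gamma ((n : ℝ) + α + β + 3 / 2) * Gamma ((k : ℝ) + 2 * β + 1) * Gamma ((n : ℝ) - k + α + 1)
    / (2 ^ (2 * β + 1) * Gamma ((n : ℝ) + β + 3 / 2)
      * Gamma (α + β + 5 / 2) * Gamma (α + 1) * Gamma (β + 1) * (n - k).factorial * k.factorial)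

section

variable {α β : ℝ} {n k : ℕ}

lemma Gamma_eq_mul_Gamma_of_eq_add_one {x y : ℝ} (h : x = y + 1) (hy : y ≠ 0) :
    Gamma x = y * Gamma y :=
  h ▸ Gamma_add_one hy

lemma parabolicPi_succ_left (hα : -1 < α) (hβ : -(1 / 2 : ℝ) < β) (hkn : k ≤ n) :
    parabolicPi α β (n + 1) k = parabolicPi α β n k *
      ((2 * (n : ℝ) - k + α + β + 7 / 2) * ((n : ℝ) + α + β + 3 / 2) * ((n : ℝ) - k + α + 1)
        / ((2 * (n : ℝ) - k + α + β + 3 / 2) * ((n : ℝ) + β + 3 / 2) * ((n : ℝ) - k + 1))) := by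
  have hk : (k : ℝ) ≤ n := by exact_mod_cast hkn
  have hΓ₁ := Gamma_eq_mul_Gamma_of_eq_add_one (x := ((n + 1 : ℕ) : ℝ) + α + β + 3 / 2)
    (by push_cast; ring) (show (n : ℝ) + α + β + 3 / 2 ≠ 0 by linarith)
  have hΓ₂ := Gamma_eq_mul_Gamma_of_eq_add_one (x := ((n + 1 : ℕ) : ℝ) - k + α + 1)
    (by push_cast; ring) (show (n : ℝ) - k + α + 1 ≠ 0 by linarith)
  have hΓ₃ := Gamma_eq_mul_Gamma_of_eq_add_one (x := ((n + 1 : ℕ) : ℝ) + β + 3 / 2)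
    (by push_cast; ring) (show (n : ℝ) + β + 3 / 2 ≠ 0 by linarith)
  have hfact : ((n + 1 - k).factorial : ℝ) = ((n : ℝ) - k + 1) * (n - k).factorial := by
    rw [Nat.succ_sub hkn, Nat.factorial_succ]
    push_cast [Nat.cast_sub hkn]
    ring
  have h₁ : 2 * (n : ℝ) - k + α + β + 3 / 2 ≠ 0 := by linarith
  unfold parabolicPi
  -- the factor `2n - k + α + β + 3/2` of `Π_{n,k}` is replaced, not multiplied, in `Π_{n+1,k}`,
  -- so it is put on both sides of the left quotient before comparing numerators and denominators
  rw [hΓ₁, hΓ₂, hΓ₃, hfact, ← mul_div_mul_comm, ← mul_div_mul_right _ _ h₁]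
  push_cast
  congr 1 <;> ring

lemma parabolicPi_succ_succ (hα : -1 < α) (hβ : -(1 / 2 : ℝ) < β) (hkn : k ≤ n) :
    parabolicPi α β (n + 1) (k + 1) = parabolicPi α β n k *
      ((2 * (k : ℝ) + 2 * β + 3) * (2 * (n : ℝ) - k + α + β + 5 / 2) * ((n : ℝ) + α + β + 3 / 2)
          * ((k : ℝ) + 2 * β + 1)
        / ((2 * (k : ℝ) + 2 * β + 1) * (2 * (n : ℝ) - k + α + β + 3 / 2) * ((n : ℝ) + β + 3 / 2)
          * ((k : ℝ) + 1))) := by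
  have hk : (k : ℝ) ≤ n := by exact_mod_cast hkn
  have hΓ₁ := Gamma_eq_mul_Gamma_of_eq_add_one (x := ((n + 1 : ℕ) : ℝ) + α + β + 3 / 2)
    (by push_cast; ring) (show (n : ℝ) + α + β + 3 / 2 ≠ 0 by linarith)
  have hΓ₂ := Gamma_eq_mul_Gamma_of_eq_add_one (x := ((k + 1 : ℕ) : ℝ) + 2 * β + 1)
    (by push_cast; ring) (show (k : ℝ) + 2 * β + 1 ≠ 0 by linarith)
  have hΓ₃ := Gamma_eq_mul_Gamma_of_eq_add_one (x := ((n + 1 : ℕ) : ℝ) + β + 3 / 2)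
    (by push_cast; ring) (show (n : ℝ) + β + 3 / 2 ≠ 0 by linarith)
  have hdiff : ((n + 1 : ℕ) : ℝ) - ((k + 1 : ℕ) : ℝ) = n - k := by push_cast; ring
  have hu : (2 * (k : ℝ) + 2 * β + 1) * (2 * (n : ℝ) - k + α + β + 3 / 2) ≠ 0 := by
    apply mul_ne_zero <;> linarith
  unfold parabolicPi
  rw [hΓ₁, hΓ₂, hΓ₃, hdiff, Nat.add_sub_add_right, Nat.factorial_succ,
    ← mul_div_mul_comm, ← mul_div_mul_right _ _ hu]
  push_cast
  congr 1 <;> ring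

end

/-- Componentwise symmetrization relations `Π_n A_{n,1} = C_{n+1,1}ᵀ Π_{n+1}` and
`Π_n A_{n,2} = C_{n+1,2}ᵀ Π_{n+1}` for the diagonal inverse norm matrices of the
orthogonal polynomials on the parabolic domain (normalized at `(1,1)`). -/
theorem stmt_8 (α β : ℝ) (hα : -1 < α) (hβ : -(1 / 2 : ℝ) < β)
    (Pi a c a3 c1 : ℕ → ℕ → ℝ)
    (hPi : ∀ n k, Pi n k =
      Real.sqrt π * (2 * (k : ℝ) + 2 * β + 1) * (2 * (n : ℝ) - k + α + β + 3 / 2)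
        * Real.Gamma ((n : ℝ) + α + β + 3 / 2) * Real.Gamma ((k : ℝ) + 2 * β + 1)
        * Real.Gamma ((n : ℝ) - k + α + 1)
      / ((2 : ℝ) ^ (2 * β + 1) * Real.Gamma ((n : ℝ) + β + 3 / 2)
        * Real.Gamma (α + β + 5 / 2) * Real.Gamma (α + 1) * Real.Gamma (β + 1)
        * (Nat.factorial (n - k) : ℝ) * (Nat.factorial k : ℝ)))
    (ha : ∀ n k, a n k = ((n : ℝ) - k + α + 1) * ((n : ℝ) + α + β + 3 / 2)
      / ((2 * (n : ℝ) - k + α + β + 3 / 2) * (2 * (n : ℝ) - k + α + β + 5 / 2)))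
    (hc : ∀ n k, c n k = ((n : ℝ) - k) * ((n : ℝ) + β + 1 / 2)
      / ((2 * (n : ℝ) - k + α + β + 1 / 2) * (2 * (n : ℝ) - k + α + β + 3 / 2)))
    (ha3 : ∀ n k, a3 n k = ((k : ℝ) + 2 * β + 1) * ((n : ℝ) + α + β + 3 / 2)
      / ((2 * (k : ℝ) + 2 * β + 1) * (2 * (n : ℝ) - k + α + β + 3 / 2)))
    (hc1 : ∀ n k, c1 n k = (k : ℝ) * ((n : ℝ) + β + 1 / 2)
      / ((2 * (k : ℝ) + 2 * β + 1) * (2 * (n : ℝ) - k + α + β + 3 / 2))) :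
    ∀ n k : ℕ, k ≤ n →
      Pi n k * a n k = c (n + 1) k * Pi (n + 1) k ∧
      Pi n k * a3 n k = c1 (n + 1) (k + 1) * Pi (n + 1) (k + 1) := by
  intro n k hkn
  obtain rfl : Pi = parabolicPi α β := funext₂ hPi
  have hk : (k : ℝ) ≤ n := by exact_mod_cast hkn
  constructor
  · rw [parabolicPi_succ_left hα hβ hkn, mul_left_comm, ha, hc]
    congr 1
    push_cast
    rw [div_mul_div_comm, div_eq_div_iff]
    · ring
    all_goals apply_rules [mul_ne_zero] <;> linarith
  · rw [parabolicPi_succ_succ hα hβ hkn, mul_left_comm, ha3, hc1]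
    congr 1
    push_cast
    rw [div_mul_div_comm, div_eq_div_iff]
    · ring
    all_goals apply_rules [mul_ne_zero] <;> linarith
end

section
/- Let α, β, γ > −1 be real numbers. For integers n and 0 ≤ k ≤ n define a_{n,k} = (n−k+α+1)(n+k+α+β+γ+2)/((2n+α+β+γ+2)(2n+α+β+γ+3)), c_{n,k} = (n−k)(n+k+β+γ+1)/((2n+α+β+γ+1)(2n+α+β+γ+2)), b_{n,k} = −(a_{n,k}+c_{n,k}), D_k = (1/2)(1 + (β²−γ²)/((2k+β+γ+2)(2k+β+γ))), and the nine quantities a^{(1)}_{n,k} = (n−k+α+1)(n−k+α+2)·k(k+β)/((2n+α+β+γ+2)(2n+α+β+γ+3)(2k+β+γ)(2k+β+γ+1)), a^{(2)}_{n,k} = D_k·a_{n,k}, a^{(3)}_{n,k} = (n+k+α+β+γ+2)(n+k+α+β+γ+3)(k+γ+1)(k+β+γ+1)/((2n+α+β+γ+2)(2n+α+β+γ+3)(2k+β+γ+1)(2k+β+γ+2)), b^{(1)}_{n,k} = 2k(k+β)(n−k+α+1)(n+k+β+γ+1)/((2k+β+γ)(2k+β+γ+1)(2n+α+β+γ+1)(2n+α+β+γ+3)),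 b^{(2)}_{n,k} = D_k·(1+b_{n,k}), b^{(3)}_{n,k} = 2(n−k)(n+k+α+β+γ+2)(k+γ+1)(k+β+γ+1)/((2n+α+β+γ+1)(2n+α+β+γ+3)(2k+β+γ+1)(2k+β+γ+2)), c^{(1)}_{n,k} = (n+k+β+γ)(n+k+β+γ+1)·k(k+β)/((2n+α+β+γ+1)(2n+α+β+γ+2)(2k+β+γ)(2k+β+γ+1)), c^{(2)}_{n,k} = D_k·c_{n,k}, c^{(3)}_{n,k} = (n−k−1)(n−k)(k+β+γ+1)(k+γ+1)/((2n+α+β+γ+1)(2n+α+β+γ+2)(2k+β+γ+1)(2k+β+γ+2)). Then for all n ≥ 3 and 1 ≤ k ≤ n−2: a^{(1)}_{n,k} + a^{(2)}_{n,k} + a^{(3)}_{n,k} + b^{(1)}_{n,k} + b^{(2)}_{n,k} + b^{(3)}_{n,k} + c^{(1)}_{n,k} + c^{(2)}_{n,k} + c^{(3)}_{n,k} = 1. -/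
/-!
Group the nine entries by the column `k - 1`, `k`, `k + 1` of `J₂` they belong to (superscripts
`(1)`, `(2)`, `(3)`). The middle entries sum to `D_k (a + (1 + b) + c) = D_k`. In each outer group
the `k`-dependent factor splits off, and what remains are the weights
`p(p+1)/(s(s+1))`, `2pq/((s-1)(s+1))`, `q(q-1)/((s-1)s)` with `s = p + q`, which sum to one
(with `p = n-k+α+1`, `q = n+k+β+γ+1` on the left and `p = n+k+α+β+γ+2`, `q = n-k` on the right).
This leaves an identity in `k` alone: `D_k + k(k+β)/(w(w+1)) + (k+γ+1)(k+β+γ+1)/((w+1)(w+2)) = 1`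
with `w = 2k+β+γ`.
-/

theorem trinomial_weights_sum_eq_one (p q : ℝ) (h₀ : p + q - 1 ≠ 0) (h₁ : p + q ≠ 0)
    (h₂ : p + q + 1 ≠ 0) :
    p * (p + 1) / ((p + q) * (p + q + 1)) + 2 * p * q / ((p + q - 1) * (p + q + 1))
      + (q - 1) * q / ((p + q - 1) * (p + q)) = 1 := by
  field_simp
  ring

namespace TriangleJacobi

variable (α β γ x y : ℝ)

/- `ring` treats the inverse of a product of sums as one opaque atom, so the denominators are
split into inverses of single factors first. -/
theorem pred_coeffs_sum (d₁ : 2 * x + α + β + γ + 1 ≠ 0) (d₂ : 2 * x + α + β + γ + 2 ≠ 0)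
    (d₃ : 2 * x + α + β + γ + 3 ≠ 0) :
    (x - y + α + 1) * (x - y + α + 2) * y * (y + β)
      / ((2 * x + α + β + γ + 2) * (2 * x + α + β + γ + 3)
        * (2 * y + β + γ) * (2 * y + β + γ + 1))
    + 2 * y * (y + β) * (x - y + α + 1) * (x + y + β + γ + 1)
      / ((2 * y + β + γ) * (2 * y + β + γ + 1)
        * (2 * x + α + β + γ + 1) * (2 * x + α + β + γ + 3))
    + (x + y + β + γ) * (x + y + β + γ + 1) * y * (y + β)
      / ((2 * x + α + β + γ + 1) * (2 * x + α + β + γ + 2)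
        * (2 * y + β + γ) * (2 * y + β + γ + 1))
    = y * (y + β) / ((2 * y + β + γ) * (2 * y + β + γ + 1)) := by
  have h := trinomial_weights_sum_eq_one (x - y + α + 1) (x + y + β + γ + 1)
    (by convert d₁ using 1; ring) (by convert d₂ using 1; ring) (by convert d₃ using 1; ring)
  linear_combination (norm := skip) y * (y + β) / ((2 * y + β + γ) * (2 * y + β + γ + 1)) * h
  simp only [div_eq_mul_inv, mul_inv]
  ring

theorem succ_coeffs_sum (d₁ : 2 * x + α + β + γ + 1 ≠ 0) (d₂ : 2 * x + α + β + γ + 2 ≠ 0)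
    (d₃ : 2 * x + α + β + γ + 3 ≠ 0) :
    (x + y + α + β + γ + 2) * (x + y + α + β + γ + 3) * (y + γ + 1) * (y + β + γ + 1)
      / ((2 * x + α + β + γ + 2) * (2 * x + α + β + γ + 3)
        * (2 * y + β + γ + 1) * (2 * y + β + γ + 2))
    + 2 * (x - y) * (x + y + α + β + γ + 2) * (y + γ + 1) * (y + β + γ + 1)
      / ((2 * x + α + β + γ + 1) * (2 * x + α + β + γ + 3)
        * (2 * y + β + γ + 1) * (2 * y + β + γ + 2))
    + (x - y - 1) * (x - y) * (y + β + γ + 1) * (y + γ + 1)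
      / ((2 * x + α + β + γ + 1) * (2 * x + α + β + γ + 2)
        * (2 * y + β + γ + 1) * (2 * y + β + γ + 2))
    = (y + γ + 1) * (y + β + γ + 1) / ((2 * y + β + γ + 1) * (2 * y + β + γ + 2)) := by
  have h := trinomial_weights_sum_eq_one (x + y + α + β + γ + 2) (x - y)
    (by convert d₁ using 1; ring) (by convert d₂ using 1; ring) (by convert d₃ using 1; ring)
  linear_combination (norm := skip)
    (y + γ + 1) * (y + β + γ + 1) / ((2 * y + β + γ + 1) * (2 * y + β + γ + 2)) * h
  simp only [div_eq_mul_inv, mul_inv]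
  ring

theorem diag_add_pred_add_succ (e₀ : 2 * y + β + γ ≠ 0) (e₁ : 2 * y + β + γ + 1 ≠ 0)
    (e₂ : 2 * y + β + γ + 2 ≠ 0) :
    (1 / 2) * (1 + (β ^ 2 - γ ^ 2) / ((2 * y + β + γ + 2) * (2 * y + β + γ)))
      + y * (y + β) / ((2 * y + β + γ) * (2 * y + β + γ + 1))
      + (y + γ + 1) * (y + β + γ + 1) / ((2 * y + β + γ + 1) * (2 * y + β + γ + 2)) = 1 := by
  field_simp
  ring

end TriangleJacobi

theorem stmt_10_general (α β γ : ℝ) (hα : -1 < α) (hβ : -1 < β) (hγ : -1 < γ)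
    (a c b D a1 a2 a3 b1 b2 b3 c1 c2 c3 : ℕ → ℕ → ℝ)
    (hb : ∀ n k, b n k = -(a n k + c n k))
    (hD : ∀ n k, D n k = (1 / 2) * (1 + (β ^ 2 - γ ^ 2)
      / ((2 * (k : ℝ) + β + γ + 2) * (2 * (k : ℝ) + β + γ))))
    (ha1 : ∀ n k, a1 n k = ((n : ℝ) - k + α + 1) * ((n : ℝ) - k + α + 2)
        * (k : ℝ) * ((k : ℝ) + β)
      / ((2 * (n : ℝ) + α + β + γ + 2) * (2 * (n : ℝ) + α + β + γ + 3)
        * (2 * (k : ℝ) + β + γ) * (2 * (k : ℝ) + β + γ + 1)))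
    (ha2 : ∀ n k, a2 n k = D n k * a n k)
    (ha3 : ∀ n k, a3 n k = ((n : ℝ) + k + α + β + γ + 2) * ((n : ℝ) + k + α + β + γ + 3)
        * ((k : ℝ) + γ + 1) * ((k : ℝ) + β + γ + 1)
      / ((2 * (n : ℝ) + α + β + γ + 2) * (2 * (n : ℝ) + α + β + γ + 3)
        * (2 * (k : ℝ) + β + γ + 1) * (2 * (k : ℝ) + β + γ + 2)))
    (hb1 : ∀ n k, b1 n k = 2 * (k : ℝ) * ((k : ℝ) + β) * ((n : ℝ) - k + α + 1)
        * ((n : ℝ) + k + β + γ + 1)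
      / ((2 * (k : ℝ) + β + γ) * (2 * (k : ℝ) + β + γ + 1)
        * (2 * (n : ℝ) + α + β + γ + 1) * (2 * (n : ℝ) + α + β + γ + 3)))
    (hb2 : ∀ n k, b2 n k = D n k * (1 + b n k))
    (hb3 : ∀ n k, b3 n k = 2 * ((n : ℝ) - k) * ((n : ℝ) + k + α + β + γ + 2)
        * ((k : ℝ) + γ + 1) * ((k : ℝ) + β + γ + 1)
      / ((2 * (n : ℝ) + α + β + γ + 1) * (2 * (n : ℝ) + α + β + γ + 3)
        * (2 * (k : ℝ) + β + γ + 1) * (2 * (k : ℝ) + β + γ + 2)))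
    (hc1 : ∀ n k, c1 n k = ((n : ℝ) + k + β + γ) * ((n : ℝ) + k + β + γ + 1)
        * (k : ℝ) * ((k : ℝ) + β)
      / ((2 * (n : ℝ) + α + β + γ + 1) * (2 * (n : ℝ) + α + β + γ + 2)
        * (2 * (k : ℝ) + β + γ) * (2 * (k : ℝ) + β + γ + 1)))
    (hc2 : ∀ n k, c2 n k = D n k * c n k)
    (hc3 : ∀ n k, c3 n k = ((n : ℝ) - k - 1) * ((n : ℝ) - k)
        * ((k : ℝ) + β + γ + 1) * ((k : ℝ) + γ + 1)
      / ((2 * (n : ℝ) + α + β + γ + 1) * (2 * (n : ℝ) + α + β + γ + 2)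
        * (2 * (k : ℝ) + β + γ + 1) * (2 * (k : ℝ) + β + γ + 2))) :
    ∀ n k : ℕ, 3 ≤ n → 1 ≤ k → k ≤ n - 2 →
      a1 n k + a2 n k + a3 n k + b1 n k + b2 n k + b3 n k
        + c1 n k + c2 n k + c3 n k = 1 := by
  intro n k hn hk _
  have hx : (1 : ℝ) ≤ n := by exact_mod_cast (by omega : 1 ≤ n)
  have hy : (1 : ℝ) ≤ k := by exact_mod_cast hk
  have h_pred : a1 n k + b1 n k + c1 n k
      = (k : ℝ) * ((k : ℝ) + β) / ((2 * (k : ℝ) + β + γ) * (2 * (k : ℝ) + β + γ + 1)) := by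
    rw [ha1, hb1, hc1]
    exact TriangleJacobi.pred_coeffs_sum α β γ n k
      (ne_of_gt (by linarith)) (ne_of_gt (by linarith)) (ne_of_gt (by linarith))
  have h_diag : a2 n k + b2 n k + c2 n k = D n k := by
    rw [ha2, hb2, hc2, hb]
    ring
  have h_succ : a3 n k + b3 n k + c3 n k
      = ((k : ℝ) + γ + 1) * ((k : ℝ) + β + γ + 1)
        / ((2 * (k : ℝ) + β + γ + 1) * (2 * (k : ℝ) + β + γ + 2)) := by
    rw [ha3, hb3, hc3]
    exact TriangleJacobi.succ_coeffs_sum α β γ n k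
      (ne_of_gt (by linarith)) (ne_of_gt (by linarith)) (ne_of_gt (by linarith))
  have h_col := TriangleJacobi.diag_add_pred_add_succ β γ k
    (ne_of_gt (by linarith)) (ne_of_gt (by linarith)) (ne_of_gt (by linarith))
  rw [← hD n k] at h_col
  linear_combination h_pred + h_diag + h_succ + h_col

/-- Every interior row `(n,k)` (with `n ≥ 3`, `1 ≤ k ≤ n−2`) of the second Jacobi
matrix `J₂` of the orthogonal polynomials on the triangle (normalized at `(0,1)`)
sums to one, so `J₂` is the transition matrix of a discrete-time QBD process. -/
theorem stmt_10 (α β γ : ℝ) (hα : -1 < α) (hβ : -1 < β) (hγ : -1 < γ)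
    (a c b D a1 a2 a3 b1 b2 b3 c1 c2 c3 : ℕ → ℕ → ℝ)
    (ha : ∀ n k, a n k = ((n : ℝ) - k + α + 1) * ((n : ℝ) + k + α + β + γ + 2)
      / ((2 * (n : ℝ) + α + β + γ + 2) * (2 * (n : ℝ) + α + β + γ + 3)))
    (hc : ∀ n k, c n k = ((n : ℝ) - k) * ((n : ℝ) + k + β + γ + 1)
      / ((2 * (n : ℝ) + α + β + γ + 1) * (2 * (n : ℝ) + α + β + γ + 2)))
    (hb : ∀ n k, b n k = -(a n k + c n k))
    (hD : ∀ n k, D n k = (1 / 2) * (1 + (β ^ 2 - γ ^ 2)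
      / ((2 * (k : ℝ) + β + γ + 2) * (2 * (k : ℝ) + β + γ))))
    (ha1 : ∀ n k, a1 n k = ((n : ℝ) - k + α + 1) * ((n : ℝ) - k + α + 2)
        * (k : ℝ) * ((k : ℝ) + β)
      / ((2 * (n : ℝ) + α + β + γ + 2) * (2 * (n : ℝ) + α + β + γ + 3)
        * (2 * (k : ℝ) + β + γ) * (2 * (k : ℝ) + β + γ + 1)))
    (ha2 : ∀ n k, a2 n k = D n k * a n k)
    (ha3 : ∀ n k, a3 n k = ((n : ℝ) + k + α + β + γ + 2) * ((n : ℝ) + k + α + β + γ + 3)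
        * ((k : ℝ) + γ + 1) * ((k : ℝ) + β + γ + 1)
      / ((2 * (n : ℝ) + α + β + γ + 2) * (2 * (n : ℝ) + α + β + γ + 3)
        * (2 * (k : ℝ) + β + γ + 1) * (2 * (k : ℝ) + β + γ + 2)))
    (hb1 : ∀ n k, b1 n k = 2 * (k : ℝ) * ((k : ℝ) + β) * ((n : ℝ) - k + α + 1)
        * ((n : ℝ) + k + β + γ + 1)
      / ((2 * (k : ℝ) + β + γ) * (2 * (k : ℝ) + β + γ + 1)
        * (2 * (n : ℝ) + α + β + γ + 1) * (2 * (n : ℝ) + α + β + γ + 3)))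
    (hb2 : ∀ n k, b2 n k = D n k * (1 + b n k))
    (hb3 : ∀ n k, b3 n k = 2 * ((n : ℝ) - k) * ((n : ℝ) + k + α + β + γ + 2)
        * ((k : ℝ) + γ + 1) * ((k : ℝ) + β + γ + 1)
      / ((2 * (n : ℝ) + α + β + γ + 1) * (2 * (n : ℝ) + α + β + γ + 3)
        * (2 * (k : ℝ) + β + γ + 1) * (2 * (k : ℝ) + β + γ + 2)))
    (hc1 : ∀ n k, c1 n k = ((n : ℝ) + k + β + γ) * ((n : ℝ) + k + β + γ + 1)
        * (k : ℝ) * ((k : ℝ) + β)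
      / ((2 * (n : ℝ) + α + β + γ + 1) * (2 * (n : ℝ) + α + β + γ + 2)
        * (2 * (k : ℝ) + β + γ) * (2 * (k : ℝ) + β + γ + 1)))
    (hc2 : ∀ n k, c2 n k = D n k * c n k)
    (hc3 : ∀ n k, c3 n k = ((n : ℝ) - k - 1) * ((n : ℝ) - k)
        * ((k : ℝ) + β + γ + 1) * ((k : ℝ) + γ + 1)
      / ((2 * (n : ℝ) + α + β + γ + 1) * (2 * (n : ℝ) + α + β + γ + 2)
        * (2 * (k : ℝ) + β + γ + 1) * (2 * (k : ℝ) + β + γ + 2))) :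
    ∀ n k : ℕ, 3 ≤ n → 1 ≤ k → k ≤ n - 2 →
      a1 n k + a2 n k + a3 n k + b1 n k + b2 n k + b3 n k
        + c1 n k + c2 n k + c3 n k = 1 :=
  stmt_10_general α β γ hα hβ hγ a c b D a1 a2 a3 b1 b2 b3 c1 c2 c3 hb hD ha1 ha2 ha3 hb1 hb2 hb3
    hc1 hc2 hc3
end

section
/- Let α, β, γ > −1 be real numbers, let T = {(x,y) ∈ ℝ² : x > 0, y > 0, x + y < 1}, and let τ ≥ 0. Then the integral ∫_T x^α y^β (1−x−y)^γ / (1 − y + τx) dx dy is infinite if and only if α + γ ≤ −1. -/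
/-!
Slice the triangle horizontally and substitute `x = (1 - y) t` on the slice at height `y`: the
integrand becomes `y^β (1-y)^(α+γ) · t^α (1-t)^γ / (1 + τ t)`, so the integral factors as
`∫₀¹ y^β (1-y)^(α+γ) dy` times `C = ∫₀¹ t^α (1-t)^γ / (1 + τ t) dt`. Since `0 < C < ∞` (the
denominator is at least `1` and the Beta integral converges), the integral is infinite exactly
when the Beta-type integral in `y` diverges, i.e. when `α + γ ≤ -1`.
-/

open MeasureTheory Set
open scoped ENNReal

theorem integrableOn_rpow_mul_one_sub_rpow {a b : ℝ} (ha : -1 < a) (hb : -1 < b) :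
    IntegrableOn (fun t : ℝ => t ^ a * (1 - t) ^ b) (Ioo 0 1) := by
  have hbeta := (Complex.betaIntegral_convergent (u := a + 1) (v := b + 1)
    (by simp; linarith) (by simp; linarith)).norm
  rw [intervalIntegrable_iff_integrableOn_Ioo_of_le zero_le_one] at hbeta
  refine hbeta.congr_fun (fun t ht => ?_) measurableSet_Ioo
  have h1t : (1 - (t : ℂ)) = ((1 - t : ℝ) : ℂ) := by push_cast; rfl
  simp only [add_sub_cancel_right, norm_mul, h1t,
    Complex.norm_cpow_eq_rpow_re_of_pos ht.1, Complex.norm_cpow_eq_rpow_re_of_pos (sub_pos.2 ht.2),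
    Complex.ofReal_re]

-- Near `t = 1` the factor `t ^ a` is bounded away from `0` and `∞`, so `(1 - t) ^ b` is integrable
-- there; reflecting `t ↦ 1 - t` reduces to integrability of `t ^ b` at `0`.
theorem neg_one_lt_of_integrableOn_rpow_mul_one_sub_rpow {a b : ℝ}
    (h : IntegrableOn (fun t : ℝ => t ^ a * (1 - t) ^ b) (Ioo 0 1)) : -1 < b := by
  have hIcc : IntegrableOn (fun t : ℝ => t ^ a * (1 - t) ^ b) (Icc (1 / 2) 1) :=
    (integrableOn_Icc_iff_integrableOn_Ioo (by finiteness) (by finiteness)).2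
      (h.mono_set (Ioo_subset_Ioo_left (by norm_num)))
  have hright : IntegrableOn (fun t : ℝ => (1 - t) ^ b) (Icc (1 / 2) 1) := by
    refine (hIcc.continuousOn_mul (g := fun t => t ^ (-a)) ?_ isCompact_Icc).congr_fun
      (fun t ht => ?_) measurableSet_Icc
    · exact continuousOn_id.rpow_const fun t ht => Or.inl (by linarith [ht.1] : (0:ℝ) < t).ne'
    · have ht0 : 0 < t := by linarith [ht.1]
      simp only [← mul_assoc, ← Real.rpow_add ht0, neg_add_cancel, Real.rpow_zero, one_mul]
  have hleft : IntervalIntegrable (fun t : ℝ => t ^ b) volume 0 (1 / 2) := by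
    have hreflected :=
      ((intervalIntegrable_iff_integrableOn_Icc_of_le (by norm_num)).2 hright).comp_sub_left 1
    norm_num at hreflected
    exact hreflected.symm
  rwa [intervalIntegrable_iff_integrableOn_Ioo_of_le (by norm_num),
    intervalIntegral.integrableOn_Ioo_rpow_iff (by norm_num)] at hleft

theorem setLIntegral_rpow_mul_one_sub_rpow_eq_top_iff {a b : ℝ} (ha : -1 < a) :
    ∫⁻ t in Ioo 0 1, ENNReal.ofReal (t ^ a * (1 - t) ^ b) = ∞ ↔ b ≤ -1 := by
  have hnonneg : 0 ≤ᵐ[volume.restrict (Ioo (0 : ℝ) 1)] fun t => t ^ a * (1 - t) ^ b := by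
    filter_upwards [ae_restrict_mem measurableSet_Ioo] with t ht
    exact mul_nonneg (Real.rpow_nonneg ht.1.le a) (Real.rpow_nonneg (sub_pos.2 ht.2).le b)
  rw [← not_iff_not, ← ne_eq, lintegral_ofReal_ne_top_iff_integrable (by fun_prop) hnonneg,
    not_le]
  exact ⟨neg_one_lt_of_integrableOn_rpow_mul_one_sub_rpow, integrableOn_rpow_mul_one_sub_rpow ha⟩

theorem setLIntegral_rpow_mul_one_sub_rpow_div_ne_top {a b τ : ℝ} (ha : -1 < a) (hb : -1 < b)
    (hτ : 0 ≤ τ) :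
    ∫⁻ t in Ioo 0 1, ENNReal.ofReal (t ^ a * (1 - t) ^ b / (1 + τ * t)) ≠ ∞ := by
  refine ((integrableOn_rpow_mul_one_sub_rpow ha hb).mono'
    (by fun_prop : Measurable _).aestronglyMeasurable ?_).lintegral_lt_top.ne
  filter_upwards [ae_restrict_mem measurableSet_Ioo] with t ht
  have hnum : 0 ≤ t ^ a * (1 - t) ^ b :=
    mul_nonneg (Real.rpow_nonneg ht.1.le a) (Real.rpow_nonneg (sub_pos.2 ht.2).le b)
  have hden : 1 ≤ 1 + τ * t := le_add_of_nonneg_right (mul_nonneg hτ ht.1.le)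
  rw [Real.norm_of_nonneg (div_nonneg hnum (by linarith))]
  exact div_le_self hnum hden

theorem setLIntegral_rpow_mul_one_sub_rpow_div_ne_zero (a b : ℝ) {τ : ℝ} (hτ : 0 ≤ τ) :
    ∫⁻ t in Ioo 0 1, ENNReal.ofReal (t ^ a * (1 - t) ^ b / (1 + τ * t)) ≠ 0 := by
  refine ((setLIntegral_pos_iff (by fun_prop)).2 ?_).ne'
  have hsupport : Function.support
      (fun t : ℝ => ENNReal.ofReal (t ^ a * (1 - t) ^ b / (1 + τ * t))) ∩ Ioo 0 1 = Ioo 0 1 := by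
    refine inter_eq_right.2 fun t ht => (ENNReal.ofReal_pos.2 ?_).ne'
    have ht0 : 0 < t := ht.1
    have ht1 : 0 < 1 - t := sub_pos.2 ht.2
    positivity
  simp [hsupport]

theorem setLIntegral_prod_eq_lintegral_slices {α β : Type*} [MeasurableSpace α]
    [MeasurableSpace β] {μ : Measure α} {ν : Measure β} [SFinite μ] [SFinite ν]
    {S : Set (α × β)} (hS : MeasurableSet S) {f : α × β → ℝ≥0∞} (hf : Measurable f) :
    ∫⁻ p in S, f p ∂(μ.prod ν) = ∫⁻ y, ∫⁻ x in {x | (x, y) ∈ S}, f (x, y) ∂μ ∂ν := by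
  rw [← lintegral_indicator hS, lintegral_prod_symm' _ (hf.indicator hS)]
  exact lintegral_congr fun y => lintegral_indicator (measurable_prodMk_right hS) _

theorem setLIntegral_triangle_eq_iterated {f : ℝ × ℝ → ℝ≥0∞} (hf : Measurable f) :
    ∫⁻ p in {p : ℝ × ℝ | 0 < p.1 ∧ 0 < p.2 ∧ p.1 + p.2 < 1}, f p =
      ∫⁻ y in Ioo 0 1, ∫⁻ x in Ioo 0 (1 - y), f (x, y) := by
  rw [Measure.volume_eq_prod, setLIntegral_prod_eq_lintegral_slices (by measurability) hf,
    ← lintegral_indicator measurableSet_Ioo]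
  refine lintegral_congr fun y => ?_
  by_cases hy : y ∈ Ioo (0 : ℝ) 1
  · rw [indicator_of_mem hy]
    congr 2
    ext x
    simp only [mem_ofPred_eq, mem_Ioo]
    constructor
    · rintro ⟨hx, -, hxy⟩; exact ⟨hx, by linarith⟩
    · rintro ⟨hx, hxy⟩; exact ⟨hx, hy.1, by linarith⟩
  · rw [indicator_of_notMem hy]
    have hempty : {x : ℝ | (x, y) ∈ {p : ℝ × ℝ | 0 < p.1 ∧ 0 < p.2 ∧ p.1 + p.2 < 1}} = ∅ :=
      eq_empty_of_forall_notMem fun x ⟨hx, hy0, hxy⟩ => hy ⟨hy0, by linarith⟩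
    rw [hempty, setLIntegral_empty]

theorem setLIntegral_Ioo_zero_eq_const_mul_comp_mul {s : ℝ} (hs : 0 < s) (g : ℝ → ℝ≥0∞) :
    ∫⁻ x in Ioo 0 s, g x = ∫⁻ t in Ioo 0 1, ENNReal.ofReal s * g (s * t) := by
  have himage : (s * ·) '' Ioo 0 1 = Ioo 0 s := by
    rw [image_mul_left_Ioo hs]; simp
  rw [← himage, lintegral_image_eq_lintegral_abs_deriv_mul measurableSet_Ioo
    (fun t _ => (hasDerivAt_const_mul s).hasDerivWithinAt)
    (mul_right_injective₀ hs.ne').injOn, abs_of_pos hs]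

-- Where `1 + τ t = 0`, the identity holds through `x / 0 = 0` on both sides.
theorem setLIntegral_triangle_slice_eq_mul (α β γ τ : ℝ) {y : ℝ} (hy : y ∈ Ioo (0 : ℝ) 1) :
    ∫⁻ x in Ioo 0 (1 - y), ENNReal.ofReal (x ^ α * y ^ β * (1 - x - y) ^ γ / (1 - y + τ * x)) =
      ENNReal.ofReal (y ^ β * (1 - y) ^ (α + γ)) *
        ∫⁻ t in Ioo 0 1, ENNReal.ofReal (t ^ α * (1 - t) ^ γ / (1 + τ * t)) := by
  have hs : 0 < 1 - y := sub_pos.2 hy.2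
  rw [setLIntegral_Ioo_zero_eq_const_mul_comp_mul hs,
    ← lintegral_const_mul' _ _ ENNReal.ofReal_ne_top]
  refine setLIntegral_congr_fun measurableSet_Ioo fun t ht => ?_
  rw [← ENNReal.ofReal_mul hs.le,
    ← ENNReal.ofReal_mul (mul_nonneg (Real.rpow_nonneg hy.1.le _) (Real.rpow_nonneg hs.le _))]
  congr 1
  have h1 : 1 - (1 - y) * t - y = (1 - y) * (1 - t) := by ring
  have h2 : 1 - y + τ * ((1 - y) * t) = (1 - y) * (1 + τ * t) := by ring
  rw [h1, h2, Real.mul_rpow hs.le ht.1.le, Real.mul_rpow hs.le (sub_pos.2 ht.2).le,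
    Real.rpow_add hs]
  field_simp

/-- Recurrence criterion for the discrete-time QBD processes `P = τJ₁ + J₂`
associated with the orthogonal polynomials on the triangle (normalized at `(0,1)`):
for every `τ ≥ 0`, the Lebesgue integral of `x^α y^β (1−x−y)^γ / (1 − y + τx)` over
the open triangle is infinite iff `α + γ ≤ −1`. -/
theorem stmt_11 (α β γ : ℝ) (hα : -1 < α) (hβ : -1 < β) (hγ : -1 < γ)
    (τ : ℝ) (hτ : 0 ≤ τ) :
    (∫⁻ p : ℝ × ℝ in {p : ℝ × ℝ | 0 < p.1 ∧ 0 < p.2 ∧ p.1 + p.2 < 1},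
        ENNReal.ofReal (p.1 ^ α * p.2 ^ β * (1 - p.1 - p.2) ^ γ /
          (1 - p.2 + τ * p.1))) = ⊤ ↔ α + γ ≤ -1 := by
  rw [setLIntegral_triangle_eq_iterated (by fun_prop),
    setLIntegral_congr_fun measurableSet_Ioo fun y hy =>
      setLIntegral_triangle_slice_eq_mul α β γ τ hy,
    lintegral_mul_const' _ _ (setLIntegral_rpow_mul_one_sub_rpow_div_ne_top hα hγ hτ),
    ENNReal.mul_eq_top]
  simp only [setLIntegral_rpow_mul_one_sub_rpow_div_ne_top hα hγ hτ,
    setLIntegral_rpow_mul_one_sub_rpow_div_ne_zero α γ hτ, ne_eq, not_false_eq_true, and_true,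
    and_false, false_or]
  exact setLIntegral_rpow_mul_one_sub_rpow_eq_top_iff hβ
end

section
/- Let β, γ ≥ 0 be real numbers with β + γ > 0, and for k ∈ ℕ define D_k = (1/2)·(1 + (β²−γ²)/((2k+β+γ+2)(2k+β+γ))). (i) If β ≥ γ, then D_k ≥ 1/2 for all k and the infimum of the sequence (D_k)_{k∈ℕ} equals 1/2. (ii) If β < γ, then D_k ≥ (β+1)/(β+γ+2) for all k and D_0 = (β+1)/(β+γ+2), so the minimum of the sequence (D_k)_{k∈ℕ} equals (β+1)/(β+γ+2). -/
/-!
Write `D_k = (1 + N / q_k) / 2` with `N = β² - γ²` and `q_k = (2k+β+γ+2)(2k+β+γ)`. Since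
`β + γ > 0`, the denominators `q_k` are positive, increasing and unbounded, so `N / q_k` tends
to `0` monotonically from the side of the sign of `N`. If `N ≥ 0` the sequence decreases to
`1/2`; if `N < 0` it increases, so its minimum is `D_0 = (β+1)/(β+γ+2)`.
-/

open Filter Topology Set

section ConstDiv

variable {ι : Type*} [Preorder ι] {q : ι → ℝ} {N : ℝ}

lemma antitone_const_div_of_nonneg (hpos : ∀ i, 0 < q i) (hq : Monotone q) (hN : 0 ≤ N) :
    Antitone fun i => N / q i :=
  fun _ _ hij => div_le_div_of_nonneg_left hN (hpos _) (hq hij)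

lemma monotone_const_div_of_nonpos (hpos : ∀ i, 0 < q i) (hq : Monotone q) (hN : N ≤ 0) :
    Monotone fun i => N / q i := by
  simpa only [neg_div, neg_neg] using
    (antitone_const_div_of_nonneg hpos hq (neg_nonneg.2 hN)).neg

end ConstDiv

def jacobiRatioDenom (β γ : ℝ) (k : ℕ) : ℝ :=
  (2 * (k : ℝ) + β + γ + 2) * (2 * (k : ℝ) + β + γ)

/-- The ratio `D_k = a⁽²⁾_{n,k} / a_{n,k}`. -/
noncomputable def jacobiRatio (β γ : ℝ) (k : ℕ) : ℝ :=
  (1 / 2) * (1 + (β ^ 2 - γ ^ 2) / jacobiRatioDenom β γ k)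

section JacobiRatio

variable {β γ : ℝ}

lemma jacobiRatioDenom_pos (hβγ : 0 < β + γ) (k : ℕ) : 0 < jacobiRatioDenom β γ k := by
  unfold jacobiRatioDenom
  have hk : (0 : ℝ) ≤ k := k.cast_nonneg
  nlinarith

lemma monotone_jacobiRatioDenom (hβγ : 0 < β + γ) : Monotone (jacobiRatioDenom β γ) := by
  intro a b hab
  have ha : (0 : ℝ) ≤ a := a.cast_nonneg
  have hab' : (a : ℝ) ≤ b := by exact_mod_cast hab
  unfold jacobiRatioDenom
  gcongr <;> linarith

lemma tendsto_jacobiRatioDenom_atTop (hβγ : 0 < β + γ) :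
    Tendsto (jacobiRatioDenom β γ) atTop atTop := by
  refine tendsto_atTop_mono (fun k => ?_) tendsto_natCast_atTop_atTop
  have hk : (0 : ℝ) ≤ k := k.cast_nonneg
  unfold jacobiRatioDenom
  nlinarith

lemma antitone_jacobiRatio (hβγ : 0 < β + γ) (h : γ ≤ β) : Antitone (jacobiRatio β γ) :=
  ((antitone_const_div_of_nonneg (jacobiRatioDenom_pos hβγ) (monotone_jacobiRatioDenom hβγ)
    (by nlinarith)).const_add 1).const_mul (by norm_num)

lemma monotone_jacobiRatio (hβγ : 0 < β + γ) (h : β ≤ γ) : Monotone (jacobiRatio β γ) :=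
  ((monotone_const_div_of_nonpos (jacobiRatioDenom_pos hβγ) (monotone_jacobiRatioDenom hβγ)
    (by nlinarith)).const_add 1).const_mul (by norm_num)

lemma tendsto_jacobiRatio_atTop (hβγ : 0 < β + γ) :
    Tendsto (jacobiRatio β γ) atTop (𝓝 (1 / 2)) := by
  have h := (tendsto_const_nhds (x := β ^ 2 - γ ^ 2)).div_atTop
    (tendsto_jacobiRatioDenom_atTop hβγ)
  have h' := (h.const_add 1).const_mul (1 / 2 : ℝ)
  rw [add_zero, mul_one] at h'
  exact h'

lemma jacobiRatio_zero (hβγ : 0 < β + γ) : jacobiRatio β γ 0 = (β + 1) / (β + γ + 2) := by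
  have h₁ : β + γ ≠ 0 := hβγ.ne'
  have h₂ : β + γ + 2 ≠ 0 := by linarith
  simp only [jacobiRatio, jacobiRatioDenom, Nat.cast_zero, mul_zero, zero_add]
  field_simp
  ring

end JacobiRatio

theorem stmt_13_general (β γ : ℝ) (hβγ : 0 < β + γ)
    (D : ℕ → ℝ)
    (hD : ∀ k, D k = (1 / 2) * (1 + (β ^ 2 - γ ^ 2)
      / ((2 * (k : ℝ) + β + γ + 2) * (2 * (k : ℝ) + β + γ)))) :
    (γ ≤ β → (∀ k, 1 / 2 ≤ D k) ∧ (⨅ k, D k) = 1 / 2) ∧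
    (β < γ → (∀ k, (β + 1) / (β + γ + 2) ≤ D k) ∧ D 0 = (β + 1) / (β + γ + 2) ∧
      (⨅ k, D k) = (β + 1) / (β + γ + 2)) := by
  obtain rfl : D = jacobiRatio β γ := funext hD
  refine ⟨fun hle => ?_, fun hlt => ?_⟩
  · have hanti := antitone_jacobiRatio hβγ hle
    have hlim := tendsto_jacobiRatio_atTop hβγ
    exact ⟨hanti.le_of_tendsto hlim, (isGLB_of_tendsto_atTop hanti hlim).ciInf_eq⟩
  · have hmono := monotone_jacobiRatio hβγ hlt.le
    have hleast : IsLeast (range (jacobiRatio β γ)) (jacobiRatio β γ 0) :=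
      ⟨mem_range_self 0, forall_mem_range.2 fun k => hmono k.zero_le⟩
    rw [← jacobiRatio_zero hβγ]
    exact ⟨fun k => hleast.2 (mem_range_self k), rfl, hleast.isGLB.ciInf_eq⟩

/-- Infimum of the sequence `D_k = (1/2)(1 + (β²−γ²)/((2k+β+γ+2)(2k+β+γ)))`:
if `β ≥ γ` the infimum is `1/2` (and `D_k ≥ 1/2` for all `k`); if `β < γ` the
minimum is `(β+1)/(β+γ+2)`, attained at `k = 0`. -/
theorem stmt_13 (β γ : ℝ) (hβ : 0 ≤ β) (hγ : 0 ≤ γ) (hβγ : 0 < β + γ)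
    (D : ℕ → ℝ)
    (hD : ∀ k, D k = (1 / 2) * (1 + (β ^ 2 - γ ^ 2)
      / ((2 * (k : ℝ) + β + γ + 2) * (2 * (k : ℝ) + β + γ)))) :
    (γ ≤ β → (∀ k, 1 / 2 ≤ D k) ∧ (⨅ k, D k) = 1 / 2) ∧
    (β < γ → (∀ k, (β + 1) / (β + γ + 2) ≤ D k) ∧ D 0 = (β + 1) / (β + γ + 2) ∧
      (⨅ k, D k) = (β + 1) / (β + γ + 2)) :=
  stmt_13_general β γ hβγ D hD
end

section
/- Let α, β, γ > −1 be real numbers with α² ≤ (β+γ+1)². For integers n ≥ 1 and 0 ≤ k ≤ n define a_{n,k} = (n−k+α+1)(n+k+α+β+γ+2)/((2n+α+β+γ+2)(2n+α+β+γ+3)) and c_{n,k} = (n−k)(n+k+β+γ+1)/((2n+α+β+γ+1)(2n+α+β+γ+2)). Then a_{n,k} + c_{n,k} ≤ 1/2 for all n ≥ 1 and 0 ≤ k ≤ n, and the supremum of a_{n,k} + c_{n,k} over all pairs (n,k) with n ≥ 1 and 0 ≤ k ≤ n equals 1/2. -/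
open Filter Topology

/-!
Over the common denominator, `a_{n,k} + c_{n,k}` falls short of `1/2` by
`((β+γ+1)² - α² + 4k(k+β+γ+1)) / (2(2n+α+β+γ+1)(2n+α+β+γ+3))`. The numerator is
nonnegative because `α² ≤ (β+γ+1)²` and `k + β + γ + 1 > 0` for `k ≥ 1`, and for
`k = 0` the defect tends to `0` as `n → ∞`, so `1/2` is the supremum.
-/

noncomputable def diagDefect (α β γ n k : ℝ) : ℝ :=
  ((β + γ + 1) ^ 2 - α ^ 2 + 4 * k * (k + β + γ + 1)) /
    (2 * ((2 * n + α + β + γ + 1) * (2 * n + α + β + γ + 3)))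

section

variable {α β γ : ℝ}

theorem add_eq_half_sub_diagDefect {n k : ℝ} (h1 : 2 * n + α + β + γ + 1 ≠ 0)
    (h2 : 2 * n + α + β + γ + 2 ≠ 0) (h3 : 2 * n + α + β + γ + 3 ≠ 0) :
    (n - k + α + 1) * (n + k + α + β + γ + 2)
        / ((2 * n + α + β + γ + 2) * (2 * n + α + β + γ + 3)) +
      (n - k) * (n + k + β + γ + 1) / ((2 * n + α + β + γ + 1) * (2 * n + α + β + γ + 2)) =
      1 / 2 - diagDefect α β γ n k := by
  unfold diagDefect
  rw [div_add_div _ _ (mul_ne_zero h2 h3) (mul_ne_zero h1 h2),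
    div_sub_div _ _ two_ne_zero (mul_ne_zero two_ne_zero (mul_ne_zero h1 h3)),
    div_eq_div_iff (by positivity) (by positivity)]
  ring

theorem diagDefect_nonneg (hα : -1 < α) (hβ : -1 < β) (hγ : -1 < γ)
    (hreg : α ^ 2 ≤ (β + γ + 1) ^ 2) {n : ℕ} (hn : 1 ≤ n) (k : ℕ) :
    0 ≤ diagDefect α β γ n k := by
  have hn' : (1 : ℝ) ≤ n := by exact_mod_cast hn
  have hk : 0 ≤ (k : ℝ) * (k + β + γ + 1) := by
    rcases Nat.eq_zero_or_pos k with rfl | hk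
    · simp
    · have : (1 : ℝ) ≤ k := by exact_mod_cast hk
      nlinarith
  unfold diagDefect
  have h1 : 0 < 2 * (n : ℝ) + α + β + γ + 1 := by linarith
  have h3 : 0 < 2 * (n : ℝ) + α + β + γ + 3 := by linarith
  exact div_nonneg (by nlinarith) (by positivity)

theorem tendsto_diagDefect_atTop (α β γ k : ℝ) :
    Tendsto (fun n : ℕ => diagDefect α β γ n k) atTop (𝓝 0) := by
  have hlin : ∀ p : ℝ, Tendsto (fun n : ℕ => 2 * (n : ℝ) + α + β + γ + p) atTop atTop :=
    fun p => (tendsto_atTop_add_const_right _ (α + β + γ + p)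
      (tendsto_natCast_atTop_atTop.const_mul_atTop two_pos)).congr fun n => by ring
  exact tendsto_const_nhds.div_atTop
    (((hlin 1).atTop_mul_atTop₀ (hlin 3)).const_mul_atTop two_pos)

end

/-- In the regime `α² ≤ (β+γ+1)²`, the sums `a_{n,k} + c_{n,k}` of the diagonal
recurrence coefficients of the triangle polynomials (normalized at `(0,1)`) are all
at most `1/2`, and `1/2` is their supremum. -/
theorem stmt_14 (α β γ : ℝ) (hα : -1 < α) (hβ : -1 < β) (hγ : -1 < γ)
    (hreg : α ^ 2 ≤ (β + γ + 1) ^ 2)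
    (a c : ℕ → ℕ → ℝ)
    (ha : ∀ n k, a n k = ((n : ℝ) - k + α + 1) * ((n : ℝ) + k + α + β + γ + 2)
      / ((2 * (n : ℝ) + α + β + γ + 2) * (2 * (n : ℝ) + α + β + γ + 3)))
    (hc : ∀ n k, c n k = ((n : ℝ) - k) * ((n : ℝ) + k + β + γ + 1)
      / ((2 * (n : ℝ) + α + β + γ + 1) * (2 * (n : ℝ) + α + β + γ + 2))) :
    (∀ n k : ℕ, 1 ≤ n → k ≤ n → a n k + c n k ≤ 1 / 2) ∧
    sSup {x : ℝ | ∃ n k : ℕ, 1 ≤ n ∧ k ≤ n ∧ x = a n k + c n k} = 1 / 2 := by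
  have sum_eq : ∀ n k : ℕ, 1 ≤ n → a n k + c n k = 1 / 2 - diagDefect α β γ n k := by
    intro n k hn
    have hn' : (1 : ℝ) ≤ n := by exact_mod_cast hn
    rw [ha, hc]
    exact add_eq_half_sub_diagDefect (by linarith) (by linarith) (by linarith)
  have bound : ∀ n k : ℕ, 1 ≤ n → k ≤ n → a n k + c n k ≤ 1 / 2 := by
    intro n k hn _
    linarith [sum_eq n k hn, diagDefect_nonneg hα hβ hγ hreg hn k]
  have upper :
      1 / 2 ∈ upperBounds {x : ℝ | ∃ n k : ℕ, 1 ≤ n ∧ k ≤ n ∧ x = a n k + c n k} :=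
    fun x ⟨n, k, hn, hk, hx⟩ => hx ▸ bound n k hn hk
  refine ⟨bound, le_antisymm (csSup_le ⟨_, 1, 0, le_rfl, Nat.zero_le _, rfl⟩ upper) ?_⟩
  have hlim : Tendsto (fun n : ℕ => a n 0 + c n 0) atTop (𝓝 (1 / 2)) := by
    refine (sub_zero (1 / 2 : ℝ) ▸
      tendsto_const_nhds.sub (tendsto_diagDefect_atTop α β γ 0)).congr' ?_
    filter_upwards [eventually_ge_atTop 1] with n hn
    simpa using (sum_eq n 0 hn).symm
  refine le_of_tendsto hlim ?_
  filter_upwards [eventually_ge_atTop 1] with n hn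
  exact le_csSup ⟨_, upper⟩ ⟨n, 0, hn, Nat.zero_le _, rfl⟩
end

section
/- Let α, β, γ > −1 be real numbers. Define, for integers n ≥ 0 and 0 ≤ k ≤ n: x^{(2)}_{n,k} = (n−k+α+1)(β+k+1)/((2n+α+β+γ+3)(β+γ+2k+2)), x^{(3)}_{n,k} = (n+k+α+β+γ+3)(γ+k+1)/((2n+α+β+γ+3)(β+γ+2k+2)), y^{(2)}_{n,k} = (n+k+β+γ+2)(β+k+1)/((2n+α+β+γ+3)(β+γ+2k+2)), y^{(3)}_{n,k} = (n−k)(γ+k+1)/((2n+α+β+γ+3)(β+γ+2k+2)), s^{(1)}_{n,k} = k(n−k+α+1)/((2n+α+β+γ+2)(β+γ+2k+1)), s^{(2)}_{n,k} = (n+k+α+β+γ+2)(β+γ+k+1)/((2n+α+β+γ+2)(β+γ+2k+1)), r^{(1)}_{n,k} = k(n+k+β+γ+1)/((2n+α+β+γ+2)(β+γ+2k+1)), r^{(2)}_{n,k} = (n−k)(β+γ+k+1)/((2n+α+β+γ+2)(β+γ+2k+1)); and define a^{(1)}_{n,k}, a^{(2)}_{n,k}, a^{(3)}_{n,k}, b^{(1)}_{n,k},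 b^{(2)}_{n,k}, b^{(3)}_{n,k}, c^{(1)}_{n,k}, c^{(2)}_{n,k}, c^{(3)}_{n,k} as in the recurrence coefficients of the triangle polynomials normalized at (0,1). Then for all n ≥ 3 and 1 ≤ k ≤ n−2 the following nine identities hold: s^{(1)}_{n,k}·x^{(2)}_{n,k−1} = a^{(1)}_{n,k}; s^{(1)}_{n,k}·x^{(3)}_{n,k−1} + s^{(2)}_{n,k}·x^{(2)}_{n,k} = a^{(2)}_{n,k}; s^{(2)}_{n,k}·x^{(3)}_{n,k} = a^{(3)}_{n,k}; s^{(1)}_{n,k}·y^{(2)}_{n,k−1} + r^{(1)}_{n,k}·x^{(2)}_{n−1,k−1} = b^{(1)}_{n,k}; s^{(1)}_{n,k}·y^{(3)}_{n,k−1} + s^{(2)}_{n,k}·y^{(2)}_{n,k} + r^{(1)}_{n,k}·x^{(3)}_{n−1,k−1} + r^{(2)}_{n,k}·x^{(2)}_{n−1,k} = b^{(2)}_{n,k}; s^{(2)}_{n,k}·y^{(3)}_{n,k} + r^{(2)}_{n,k}·x^{(3)}_{n−1,k} = b^{(3)}_{n,k}; r^{(1)}_{n,k}·y^{(2)}_{n−1,k−1}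 = c^{(1)}_{n,k}; r^{(1)}_{n,k}·y^{(3)}_{n−1,k−1} + r^{(2)}_{n,k}·y^{(2)}_{n−1,k} = c^{(2)}_{n,k}; r^{(2)}_{n,k}·y^{(3)}_{n−1,k} = c^{(3)}_{n,k}. -/
/-!
Every identity is an identity of rational functions in `n` and `k`. The one-term identities
(`a⁽¹⁾, a⁽³⁾, c⁽¹⁾, c⁽³⁾`) only regroup factors. The two-term identities for `b⁽¹⁾` and `b⁽³⁾`
reduce to `1 / (N (N + 1)) + 1 / (N (N - 1)) = 2 / ((N - 1) (N + 1))` with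
`N = 2n + α + β + γ + 2`, and those for `a⁽²⁾, c⁽²⁾` to the partial-fraction splitting
`D_k = k (k + γ) / (E₁ E₀) + (k + β + γ + 1) (k + β + 1) / (E₁ E₂)`, `E_j = 2k + β + γ + j`.
In the four-term identity for `b⁽²⁾` each of these two weights multiplies an expression in `n`
equal to `1 + b_{n,k}`.
-/

noncomputable section

namespace TriangleQBD

variable (α β γ : ℝ)

def a (n k : ℝ) : ℝ :=
  (n - k + α + 1) * (n + k + α + β + γ + 2) / ((2 * n + α + β + γ + 2) * (2 * n + α + β + γ + 3))

def c (n k : ℝ) : ℝ :=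
  (n - k) * (n + k + β + γ + 1) / ((2 * n + α + β + γ + 1) * (2 * n + α + β + γ + 2))

def b (n k : ℝ) : ℝ := -(a α β γ n k + c α β γ n k)

def D (k : ℝ) : ℝ := 1 / 2 * (1 + (β ^ 2 - γ ^ 2) / ((2 * k + β + γ + 2) * (2 * k + β + γ)))

def a₁ (n k : ℝ) : ℝ :=
  (n - k + α + 1) * (n - k + α + 2) * k * (k + β)
    / ((2 * n + α + β + γ + 2) * (2 * n + α + β + γ + 3) * (2 * k + β + γ) * (2 * k + β + γ + 1))

def a₂ (n k : ℝ) : ℝ := D β γ k * a α β γ n k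

def a₃ (n k : ℝ) : ℝ :=
  (n + k + α + β + γ + 2) * (n + k + α + β + γ + 3) * (k + γ + 1) * (k + β + γ + 1)
    / ((2 * n + α + β + γ + 2) * (2 * n + α + β + γ + 3) * (2 * k + β + γ + 1)
      * (2 * k + β + γ + 2))

def b₁ (n k : ℝ) : ℝ :=
  2 * k * (k + β) * (n - k + α + 1) * (n + k + β + γ + 1)
    / ((2 * k + β + γ) * (2 * k + β + γ + 1) * (2 * n + α + β + γ + 1) * (2 * n + α + β + γ + 3))

def b₂ (n k : ℝ) : ℝ := D β γ k * (1 + b α β γ n k)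

def b₃ (n k : ℝ) : ℝ :=
  2 * (n - k) * (n + k + α + β + γ + 2) * (k + γ + 1) * (k + β + γ + 1)
    / ((2 * n + α + β + γ + 1) * (2 * n + α + β + γ + 3) * (2 * k + β + γ + 1)
      * (2 * k + β + γ + 2))

def c₁ (n k : ℝ) : ℝ :=
  (n + k + β + γ) * (n + k + β + γ + 1) * k * (k + β)
    / ((2 * n + α + β + γ + 1) * (2 * n + α + β + γ + 2) * (2 * k + β + γ) * (2 * k + β + γ + 1))

def c₂ (n k : ℝ) : ℝ := D β γ k * c α β γ n k

def c₃ (n k : ℝ) : ℝ :=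
  (n - k - 1) * (n - k) * (k + β + γ + 1) * (k + γ + 1)
    / ((2 * n + α + β + γ + 1) * (2 * n + α + β + γ + 2) * (2 * k + β + γ + 1)
      * (2 * k + β + γ + 2))

def x₂ (n k : ℝ) : ℝ :=
  (n - k + α + 1) * (β + k + 1) / ((2 * n + α + β + γ + 3) * (β + γ + 2 * k + 2))

def x₃ (n k : ℝ) : ℝ :=
  (n + k + α + β + γ + 3) * (γ + k + 1) / ((2 * n + α + β + γ + 3) * (β + γ + 2 * k + 2))

def y₂ (n k : ℝ) : ℝ :=
  (n + k + β + γ + 2) * (β + k + 1) / ((2 * n + α + β + γ + 3) * (β + γ + 2 * k + 2))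

def y₃ (n k : ℝ) : ℝ :=
  (n - k) * (γ + k + 1) / ((2 * n + α + β + γ + 3) * (β + γ + 2 * k + 2))

def s₁ (n k : ℝ) : ℝ :=
  k * (n - k + α + 1) / ((2 * n + α + β + γ + 2) * (β + γ + 2 * k + 1))

def s₂ (n k : ℝ) : ℝ :=
  (n + k + α + β + γ + 2) * (β + γ + k + 1) / ((2 * n + α + β + γ + 2) * (β + γ + 2 * k + 1))

def r₁ (n k : ℝ) : ℝ :=
  k * (n + k + β + γ + 1) / ((2 * n + α + β + γ + 2) * (β + γ + 2 * k + 1))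

def r₂ (n k : ℝ) : ℝ :=
  (n - k) * (β + γ + k + 1) / ((2 * n + α + β + γ + 2) * (β + γ + 2 * k + 1))

variable {α β γ}

theorem inv_mul_add_inv_mul_sub {K : Type*} [Field K] {t : K} (h₀ : t ≠ 0) (h₁ : t + 1 ≠ 0)
    (h₂ : t - 1 ≠ 0) : (t * (t + 1))⁻¹ + (t * (t - 1))⁻¹ = 2 * ((t - 1) * (t + 1))⁻¹ := by
  field_simp
  ring

-- `field_simp` looks for side conditions in its normal form `k * 2 + ⋯ ≠ 0`, hence the `have`s here and below.
theorem D_eq_add {k : ℝ} (hk : 0 < 2 * k + β + γ) :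
    D β γ k = k * (k + γ) / ((2 * k + β + γ + 1) * (2 * k + β + γ))
      + (k + β + γ + 1) * (k + β + 1) / ((2 * k + β + γ + 1) * (2 * k + β + γ + 2)) := by
  have : k * 2 + β + γ ≠ 0 := by linarith
  have : k * 2 + β + γ + 1 ≠ 0 := by linarith
  have : k * 2 + β + γ + 2 ≠ 0 := by linarith
  unfold D
  field_simp
  ring

theorem one_add_b_eq_left {n k : ℝ} (hn : 0 < 2 * n + α + β + γ + 1) :
    1 + b α β γ n k
      = (n - k + α + 1) * (n - k + 1) / ((2 * n + α + β + γ + 2) * (2 * n + α + β + γ + 3))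
        + (n + k + β + γ + 1) * (n + k + α + β + γ + 1)
          / ((2 * n + α + β + γ + 2) * (2 * n + α + β + γ + 1)) := by
  have : n * 2 + α + β + γ + 1 ≠ 0 := by linarith
  have : n * 2 + α + β + γ + 2 ≠ 0 := by linarith
  have : n * 2 + α + β + γ + 3 ≠ 0 := by linarith
  unfold b a c
  field_simp
  ring

theorem one_add_b_eq_right {n k : ℝ} (hn : 0 < 2 * n + α + β + γ + 1) :
    1 + b α β γ n k
      = (n + k + α + β + γ + 2) * (n + k + β + γ + 2)
          / ((2 * n + α + β + γ + 2) * (2 * n + α + β + γ + 3))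
        + (n - k) * (n - k + α) / ((2 * n + α + β + γ + 2) * (2 * n + α + β + γ + 1)) := by
  have : n * 2 + α + β + γ + 1 ≠ 0 := by linarith
  have : n * 2 + α + β + γ + 2 ≠ 0 := by linarith
  have : n * 2 + α + β + γ + 3 ≠ 0 := by linarith
  unfold b a c
  field_simp
  ring

theorem lu_a₁ (n k : ℝ) : s₁ α β γ n k * x₂ α β γ n (k - 1) = a₁ α β γ n k := by
  simp only [s₁, x₂, a₁, div_eq_mul_inv, mul_inv]
  ring

theorem lu_a₂ {n k : ℝ} (hk : 0 < 2 * k + β + γ) :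
    s₁ α β γ n k * x₃ α β γ n (k - 1) + s₂ α β γ n k * x₂ α β γ n k = a₂ α β γ n k := by
  rw [a₂, D_eq_add hk]
  simp only [s₁, x₃, s₂, x₂, a, div_eq_mul_inv, mul_inv]
  ring

theorem lu_a₃ (n k : ℝ) : s₂ α β γ n k * x₃ α β γ n k = a₃ α β γ n k := by
  simp only [s₂, x₃, a₃, div_eq_mul_inv, mul_inv]
  ring

theorem lu_b₁ {n k : ℝ} (hn : 0 < 2 * n + α + β + γ + 1) :
    s₁ α β γ n k * y₂ α β γ n (k - 1) + r₁ α β γ n k * x₂ α β γ (n - 1) (k - 1)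
      = b₁ α β γ n k := by
  set N := 2 * n + α + β + γ + 2 with hN
  calc _ = k * (k + β) * (n - k + α + 1) * (n + k + β + γ + 1)
          / ((2 * k + β + γ) * (2 * k + β + γ + 1)) * ((N * (N + 1))⁻¹ + (N * (N - 1))⁻¹) := by
        simp only [s₁, y₂, r₁, x₂, hN, div_eq_mul_inv, mul_inv]
        ring
    _ = b₁ α β γ n k := by
        rw [inv_mul_add_inv_mul_sub (by linarith) (by linarith) (by linarith)]
        simp only [b₁, hN, div_eq_mul_inv, mul_inv]
        ring

theorem lu_b₂ {n k : ℝ} (hn : 0 < 2 * n + α + β + γ + 1) (hk : 0 < 2 * k + β + γ) :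
    s₁ α β γ n k * y₃ α β γ n (k - 1) + s₂ α β γ n k * y₂ α β γ n k
      + r₁ α β γ n k * x₃ α β γ (n - 1) (k - 1) + r₂ α β γ n k * x₂ α β γ (n - 1) k
      = b₂ α β γ n k := by
  rw [b₂, D_eq_add hk, add_mul]
  nth_rw 1 [one_add_b_eq_left hn]
  rw [one_add_b_eq_right hn]
  simp only [s₁, y₃, s₂, y₂, r₁, x₃, r₂, x₂, div_eq_mul_inv, mul_inv]
  ring

theorem lu_b₃ {n k : ℝ} (hn : 0 < 2 * n + α + β + γ + 1) :
    s₂ α β γ n k * y₃ α β γ n k + r₂ α β γ n k * x₃ α β γ (n - 1) k = b₃ α β γ n k := by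
  set N := 2 * n + α + β + γ + 2 with hN
  calc _ = (n - k) * (n + k + α + β + γ + 2) * (k + γ + 1) * (k + β + γ + 1)
          / ((2 * k + β + γ + 1) * (2 * k + β + γ + 2))
          * ((N * (N + 1))⁻¹ + (N * (N - 1))⁻¹) := by
        simp only [s₂, y₃, r₂, x₃, hN, div_eq_mul_inv, mul_inv]
        ring
    _ = b₃ α β γ n k := by
        rw [inv_mul_add_inv_mul_sub (by linarith) (by linarith) (by linarith)]
        simp only [b₃, hN, div_eq_mul_inv, mul_inv]
        ring

theorem lu_c₁ (n k : ℝ) : r₁ α β γ n k * y₂ α β γ (n - 1) (k - 1) = c₁ α β γ n k := by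
  simp only [r₁, y₂, c₁, div_eq_mul_inv, mul_inv]
  ring

theorem lu_c₂ {n k : ℝ} (hk : 0 < 2 * k + β + γ) :
    r₁ α β γ n k * y₃ α β γ (n - 1) (k - 1) + r₂ α β γ n k * y₂ α β γ (n - 1) k
      = c₂ α β γ n k := by
  rw [c₂, D_eq_add hk]
  simp only [r₁, y₃, r₂, y₂, c, div_eq_mul_inv, mul_inv]
  ring

theorem lu_c₃ (n k : ℝ) : r₂ α β γ n k * y₃ α β γ (n - 1) k = c₃ α β γ n k := by
  simp only [r₂, y₃, c₃, div_eq_mul_inv, mul_inv]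
  ring

end TriangleQBD

end

/-- The nine entrywise identities of the stochastic block LU factorization
`J₂ = J_L · J_U` of the Jacobi matrix of the QBD process on the triangle
(polynomials normalized at `(0,1)`), where `J_L` has entries `s⁽¹⁾, s⁽²⁾, r⁽¹⁾, r⁽²⁾`
and `J_U` has entries `x⁽²⁾, x⁽³⁾, y⁽²⁾, y⁽³⁾`. -/
theorem stmt_15 (α β γ : ℝ) (hα : -1 < α) (hβ : -1 < β) (hγ : -1 < γ)
    (a c b D a1 a2 a3 b1 b2 b3 c1 c2 c3 x2 x3 y2 y3 s1 s2 r1 r2 : ℕ → ℕ → ℝ)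
    (ha : ∀ n k, a n k = ((n : ℝ) - k + α + 1) * ((n : ℝ) + k + α + β + γ + 2)
      / ((2 * (n : ℝ) + α + β + γ + 2) * (2 * (n : ℝ) + α + β + γ + 3)))
    (hc : ∀ n k, c n k = ((n : ℝ) - k) * ((n : ℝ) + k + β + γ + 1)
      / ((2 * (n : ℝ) + α + β + γ + 1) * (2 * (n : ℝ) + α + β + γ + 2)))
    (hb : ∀ n k, b n k = -(a n k + c n k))
    (hD : ∀ n k, D n k = (1 / 2) * (1 + (β ^ 2 - γ ^ 2)
      / ((2 * (k : ℝ) + β + γ + 2) * (2 * (k : ℝ) + β + γ))))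
    (ha1 : ∀ n k, a1 n k = ((n : ℝ) - k + α + 1) * ((n : ℝ) - k + α + 2)
        * (k : ℝ) * ((k : ℝ) + β)
      / ((2 * (n : ℝ) + α + β + γ + 2) * (2 * (n : ℝ) + α + β + γ + 3)
        * (2 * (k : ℝ) + β + γ) * (2 * (k : ℝ) + β + γ + 1)))
    (ha2 : ∀ n k, a2 n k = D n k * a n k)
    (ha3 : ∀ n k, a3 n k = ((n : ℝ) + k + α + β + γ + 2) * ((n : ℝ) + k + α + β + γ + 3)
        * ((k : ℝ) + γ + 1) * ((k : ℝ) + β + γ + 1)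
      / ((2 * (n : ℝ) + α + β + γ + 2) * (2 * (n : ℝ) + α + β + γ + 3)
        * (2 * (k : ℝ) + β + γ + 1) * (2 * (k : ℝ) + β + γ + 2)))
    (hb1 : ∀ n k, b1 n k = 2 * (k : ℝ) * ((k : ℝ) + β) * ((n : ℝ) - k + α + 1)
        * ((n : ℝ) + k + β + γ + 1)
      / ((2 * (k : ℝ) + β + γ) * (2 * (k : ℝ) + β + γ + 1)
        * (2 * (n : ℝ) + α + β + γ + 1) * (2 * (n : ℝ) + α + β + γ + 3)))
    (hb2 : ∀ n k, b2 n k = D n k * (1 + b n k))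
    (hb3 : ∀ n k, b3 n k = 2 * ((n : ℝ) - k) * ((n : ℝ) + k + α + β + γ + 2)
        * ((k : ℝ) + γ + 1) * ((k : ℝ) + β + γ + 1)
      / ((2 * (n : ℝ) + α + β + γ + 1) * (2 * (n : ℝ) + α + β + γ + 3)
        * (2 * (k : ℝ) + β + γ + 1) * (2 * (k : ℝ) + β + γ + 2)))
    (hc1 : ∀ n k, c1 n k = ((n : ℝ) + k + β + γ) * ((n : ℝ) + k + β + γ + 1)
        * (k : ℝ) * ((k : ℝ) + β)
      / ((2 * (n : ℝ) + α + β + γ + 1) * (2 * (n : ℝ) + α + β + γ + 2)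
        * (2 * (k : ℝ) + β + γ) * (2 * (k : ℝ) + β + γ + 1)))
    (hc2 : ∀ n k, c2 n k = D n k * c n k)
    (hc3 : ∀ n k, c3 n k = ((n : ℝ) - k - 1) * ((n : ℝ) - k)
        * ((k : ℝ) + β + γ + 1) * ((k : ℝ) + γ + 1)
      / ((2 * (n : ℝ) + α + β + γ + 1) * (2 * (n : ℝ) + α + β + γ + 2)
        * (2 * (k : ℝ) + β + γ + 1) * (2 * (k : ℝ) + β + γ + 2)))
    (hx2 : ∀ n k, x2 n k = ((n : ℝ) - k + α + 1) * (β + (k : ℝ) + 1)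
      / ((2 * (n : ℝ) + α + β + γ + 3) * (β + γ + 2 * (k : ℝ) + 2)))
    (hx3 : ∀ n k, x3 n k = ((n : ℝ) + k + α + β + γ + 3) * (γ + (k : ℝ) + 1)
      / ((2 * (n : ℝ) + α + β + γ + 3) * (β + γ + 2 * (k : ℝ) + 2)))
    (hy2 : ∀ n k, y2 n k = ((n : ℝ) + k + β + γ + 2) * (β + (k : ℝ) + 1)
      / ((2 * (n : ℝ) + α + β + γ + 3) * (β + γ + 2 * (k : ℝ) + 2)))
    (hy3 : ∀ n k, y3 n k = ((n : ℝ) - k) * (γ + (k : ℝ) + 1)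
      / ((2 * (n : ℝ) + α + β + γ + 3) * (β + γ + 2 * (k : ℝ) + 2)))
    (hs1 : ∀ n k, s1 n k = (k : ℝ) * ((n : ℝ) - k + α + 1)
      / ((2 * (n : ℝ) + α + β + γ + 2) * (β + γ + 2 * (k : ℝ) + 1)))
    (hs2 : ∀ n k, s2 n k = ((n : ℝ) + k + α + β + γ + 2) * (β + γ + (k : ℝ) + 1)
      / ((2 * (n : ℝ) + α + β + γ + 2) * (β + γ + 2 * (k : ℝ) + 1)))
    (hr1 : ∀ n k, r1 n k = (k : ℝ) * ((n : ℝ) + k + β + γ + 1)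
      / ((2 * (n : ℝ) + α + β + γ + 2) * (β + γ + 2 * (k : ℝ) + 1)))
    (hr2 : ∀ n k, r2 n k = ((n : ℝ) - k) * (β + γ + (k : ℝ) + 1)
      / ((2 * (n : ℝ) + α + β + γ + 2) * (β + γ + 2 * (k : ℝ) + 1))) :
    ∀ n k : ℕ, 3 ≤ n → 1 ≤ k → k ≤ n - 2 →
      s1 n k * x2 n (k - 1) = a1 n k ∧
      s1 n k * x3 n (k - 1) + s2 n k * x2 n k = a2 n k ∧
      s2 n k * x3 n k = a3 n k ∧
      s1 n k * y2 n (k - 1) + r1 n k * x2 (n - 1) (k - 1) = b1 n k ∧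
      s1 n k * y3 n (k - 1) + s2 n k * y2 n k + r1 n k * x3 (n - 1) (k - 1)
        + r2 n k * x2 (n - 1) k = b2 n k ∧
      s2 n k * y3 n k + r2 n k * x3 (n - 1) k = b3 n k ∧
      r1 n k * y2 (n - 1) (k - 1) = c1 n k ∧
      r1 n k * y3 (n - 1) (k - 1) + r2 n k * y2 (n - 1) k = c2 n k ∧
      r2 n k * y3 (n - 1) k = c3 n k := by
  intro n k hn hk _
  have hN : (0 : ℝ) < 2 * n + α + β + γ + 1 := by
    have : (3 : ℝ) ≤ n := by exact_mod_cast hn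
    linarith
  have hK : (0 : ℝ) < 2 * k + β + γ := by
    have : (1 : ℝ) ≤ k := by exact_mod_cast hk
    linarith
  have hn₁ : ((n - 1 : ℕ) : ℝ) = n - 1 := by rw [Nat.cast_sub (by omega), Nat.cast_one]
  have hk₁ : ((k - 1 : ℕ) : ℝ) = k - 1 := by rw [Nat.cast_sub hk, Nat.cast_one]
  simp only [ha1, ha2, ha3, hb1, hb2, hb3, hc1, hc2, hc3, hb, ha, hc, hD,
    hx2, hx3, hy2, hy3, hs1, hs2, hr1, hr2, hn₁, hk₁]
  open TriangleQBD in
  exact ⟨lu_a₁ _ _, lu_a₂ hK, lu_a₃ _ _, lu_b₁ hN, lu_b₂ hN hK, lu_b₃ hN,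
    lu_c₁ _ _, lu_c₂ hK, lu_c₃ _ _⟩
end

section
/- Let α, β, γ be real numbers with α > −1, β > −1, γ > −1. For integers n ≥ 0 and 0 ≤ k ≤ n define x^{(2)}_{n,k} = (n−k+α+1)(β+k+1)/((2n+α+β+γ+3)(β+γ+2k+2)), x^{(3)}_{n,k} = (n+k+α+β+γ+3)(γ+k+1)/((2n+α+β+γ+3)(β+γ+2k+2)), y^{(2)}_{n,k} = (n+k+β+γ+2)(β+k+1)/((2n+α+β+γ+3)(β+γ+2k+2)), y^{(3)}_{n,k} = (n−k)(γ+k+1)/((2n+α+β+γ+3)(β+γ+2k+2)). Then for all n ≥ 0 and 0 ≤ k ≤ n each of these four quantities is nonnegative and x^{(2)}_{n,k} + x^{(3)}_{n,k} + y^{(2)}_{n,k} + y^{(3)}_{n,k} = 1. -/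
theorem triangle_urn_numerators_sum {R : Type*} [CommRing R] (a b c n k : R) :
    (n - k + a + 1) * (b + k + 1) + (n + k + a + b + c + 3) * (c + k + 1)
      + (n + k + b + c + 2) * (b + k + 1) + (n - k) * (c + k + 1)
      = (2 * n + a + b + c + 3) * (b + c + 2 * k + 2) := by
  ring

theorem triangle_urn_denominator_pos {a b c n k : ℝ} (ha : -1 < a) (hb : -1 < b) (hc : -1 < c)
    (hk : 0 ≤ k) (hkn : k ≤ n) :
    0 < (2 * n + a + b + c + 3) * (b + c + 2 * k + 2) :=
  mul_pos (by linarith) (by linarith)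

/-- The entries in row `(n,k)` of the upper factor `J_U` of the stochastic LU
factorization of the triangle Jacobi matrix are nonnegative and sum to one:
`J_U` is a stochastic matrix. -/
theorem stmt_17 (α β γ : ℝ) (hα : -1 < α) (hβ : -1 < β) (hγ : -1 < γ)
    (x2 x3 y2 y3 : ℕ → ℕ → ℝ)
    (hx2 : ∀ n k, x2 n k = ((n : ℝ) - k + α + 1) * (β + (k : ℝ) + 1)
      / ((2 * (n : ℝ) + α + β + γ + 3) * (β + γ + 2 * (k : ℝ) + 2)))
    (hx3 : ∀ n k, x3 n k = ((n : ℝ) + k + α + β + γ + 3) * (γ + (k : ℝ) + 1)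
      / ((2 * (n : ℝ) + α + β + γ + 3) * (β + γ + 2 * (k : ℝ) + 2)))
    (hy2 : ∀ n k, y2 n k = ((n : ℝ) + k + β + γ + 2) * (β + (k : ℝ) + 1)
      / ((2 * (n : ℝ) + α + β + γ + 3) * (β + γ + 2 * (k : ℝ) + 2)))
    (hy3 : ∀ n k, y3 n k = ((n : ℝ) - k) * (γ + (k : ℝ) + 1)
      / ((2 * (n : ℝ) + α + β + γ + 3) * (β + γ + 2 * (k : ℝ) + 2))) :
    ∀ n k : ℕ, k ≤ n →
      0 ≤ x2 n k ∧ 0 ≤ x3 n k ∧ 0 ≤ y2 n k ∧ 0 ≤ y3 n k ∧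
      x2 n k + x3 n k + y2 n k + y3 n k = 1 := by
  intro n k hk
  have hk0 : (0 : ℝ) ≤ k := k.cast_nonneg
  have hkn : (k : ℝ) ≤ n := by exact_mod_cast hk
  have hden := triangle_urn_denominator_pos hα hβ hγ hk0 hkn
  rw [hx2, hx3, hy2, hy3]
  refine ⟨?_, ?_, ?_, ?_, ?_⟩
  iterate 4 exact div_nonneg (mul_nonneg (by linarith) (by linarith)) hden.le
  rw [← add_div, ← add_div, ← add_div, triangle_urn_numerators_sum,
    div_self hden.ne']
end

section
/- Let α, β, γ be real numbers with α > −1, β ≥ γ ≥ 0, β + γ > 0 and α² ≤ (β+γ+1)², and let τ be a real number with −1/2 ≤ τ ≤ 1/2. For integers n ≥ 1 and 0 ≤ k ≤ n define a_{n,k} = (n−k+α+1)(n+k+α+β+γ+2)/((2n+α+β+γ+2)(2n+α+β+γ+3)), c_{n,k} = (n−k)(n+k+β+γ+1)/((2n+α+β+γ+1)(2n+α+β+γ+2)), D_k = (1/2)(1 + (β²−γ²)/((2k+β+γ+2)(2k+β+γ))), a^{(2)}_{n,k} = D_k·a_{n,k}, c^{(2)}_{n,k} = D_k·c_{n,k},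 and b^{(2)}_{n,k} = D_k·(1 − a_{n,k} − c_{n,k}). Then for all n ≥ 1 and 0 ≤ k ≤ n: τ·a_{n,k} + a^{(2)}_{n,k} ≥ 0, τ·c_{n,k} + c^{(2)}_{n,k} ≥ 0, and b^{(2)}_{n,k} − τ·(a_{n,k} + c_{n,k}) ≥ 0. -/
/-!
Every entry in question is a combination of `a = a_{n,k}`, `c = c_{n,k}` and `D = D_k` that is
nonnegative as soon as `a, c ≥ 0`, `D ≥ 1/2` and `a + c ≤ 1/2`, e.g.
`D (1 - a - c) - τ (a + c) ≥ (1 - a - c)/2 - (a + c)/2 ≥ 0`.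
Here `D ≥ 1/2` because `β² ≥ γ²`, and `a + c ≤ 1/2` comes from the closed form
`1/2 - a - c = ((β+γ+1)² - α² + 4k(k+β+γ+1)) / (2(2n+α+β+γ+1)(2n+α+β+γ+3))`.
-/

namespace TriangleJacobi

variable (α β γ : ℝ)

noncomputable def coeffA (n k : ℝ) : ℝ :=
  (n - k + α + 1) * (n + k + α + β + γ + 2)
    / ((2 * n + α + β + γ + 2) * (2 * n + α + β + γ + 3))

noncomputable def coeffC (n k : ℝ) : ℝ :=
  (n - k) * (n + k + β + γ + 1) / ((2 * n + α + β + γ + 1) * (2 * n + α + β + γ + 2))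

noncomputable def coeffD (k : ℝ) : ℝ :=
  (1 / 2) * (1 + (β ^ 2 - γ ^ 2) / ((2 * k + β + γ + 2) * (2 * k + β + γ)))

variable {α β γ} {n k : ℝ}

theorem half_le_coeffD (hγ : 0 ≤ γ) (hγβ : γ ≤ β) (hk : 0 ≤ k) : 1 / 2 ≤ coeffD β γ k := by
  have hquot : 0 ≤ (β ^ 2 - γ ^ 2) / ((2 * k + β + γ + 2) * (2 * k + β + γ)) :=
    div_nonneg (by nlinarith) (mul_nonneg (by linarith) (by linarith))
  unfold coeffD
  linarith

section

variable (hα : -1 < α) (hs : 0 ≤ β + γ) (hk : 0 ≤ k) (hkn : k ≤ n)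
include hα hs hk hkn

theorem coeffA_nonneg : 0 ≤ coeffA α β γ n k :=
  div_nonneg (mul_nonneg (by linarith) (by linarith))
    (mul_nonneg (by linarith) (by linarith))

theorem coeffC_nonneg : 0 ≤ coeffC α β γ n k :=
  div_nonneg (mul_nonneg (by linarith) (by linarith))
    (mul_nonneg (by linarith) (by linarith))

theorem half_sub_coeffA_sub_coeffC :
    1 / 2 - coeffA α β γ n k - coeffC α β γ n k =
      ((β + γ + 1) ^ 2 - α ^ 2 + 4 * k * (k + β + γ + 1))
        / (2 * (2 * n + α + β + γ + 1) * (2 * n + α + β + γ + 3)) := by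
  have h₁ : 2 * n + α + β + γ + 1 ≠ 0 := by linarith
  have h₂ : 2 * n + α + β + γ + 2 ≠ 0 := by linarith
  have h₃ : 2 * n + α + β + γ + 3 ≠ 0 := by linarith
  unfold coeffA coeffC
  field_simp
  ring

theorem coeffA_add_coeffC_le_half (hreg : α ^ 2 ≤ (β + γ + 1) ^ 2) :
    coeffA α β γ n k + coeffC α β γ n k ≤ 1 / 2 := by
  have hgap := half_sub_coeffA_sub_coeffC hα hs hk hkn
  have : 0 ≤ ((β + γ + 1) ^ 2 - α ^ 2 + 4 * k * (k + β + γ + 1))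
      / (2 * (2 * n + α + β + γ + 1) * (2 * n + α + β + γ + 3)) :=
    div_nonneg (by nlinarith) (mul_nonneg (by linarith) (by linarith))
  linarith

end

end TriangleJacobi

theorem qbd_entries_nonneg {τ D a c : ℝ} (hτ₁ : -(1 / 2) ≤ τ) (hτ₂ : τ ≤ 1 / 2)
    (hD : 1 / 2 ≤ D) (ha : 0 ≤ a) (hc : 0 ≤ c) (hac : a + c ≤ 1 / 2) :
    0 ≤ τ * a + D * a ∧ 0 ≤ τ * c + D * c ∧ 0 ≤ D * (1 - a - c) - τ * (a + c) := by
  have hτD : 0 ≤ τ + D := by linarith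
  refine ⟨by nlinarith, by nlinarith, ?_⟩
  calc 0 ≤ (1 / 2) * (1 - a - c) - (1 / 2) * (a + c) := by linarith
    _ ≤ D * (1 - a - c) - τ * (a + c) := by
      gcongr; all_goals linarith

open TriangleJacobi in
theorem stmt_19_general (α β γ τ : ℝ) (hα : -1 < α) (hβγ' : γ ≤ β) (hγ : 0 ≤ γ)
    (hreg : α ^ 2 ≤ (β + γ + 1) ^ 2)
    (hτ1 : -(1 / 2 : ℝ) ≤ τ) (hτ2 : τ ≤ 1 / 2)
    (a c D a2 c2 b2 : ℕ → ℕ → ℝ)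
    (ha : ∀ n k, a n k = ((n : ℝ) - k + α + 1) * ((n : ℝ) + k + α + β + γ + 2)
      / ((2 * (n : ℝ) + α + β + γ + 2) * (2 * (n : ℝ) + α + β + γ + 3)))
    (hc : ∀ n k, c n k = ((n : ℝ) - k) * ((n : ℝ) + k + β + γ + 1)
      / ((2 * (n : ℝ) + α + β + γ + 1) * (2 * (n : ℝ) + α + β + γ + 2)))
    (hD : ∀ n k, D n k = (1 / 2) * (1 + (β ^ 2 - γ ^ 2)
      / ((2 * (k : ℝ) + β + γ + 2) * (2 * (k : ℝ) + β + γ))))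
    (ha2 : ∀ n k, a2 n k = D n k * a n k)
    (hc2 : ∀ n k, c2 n k = D n k * c n k)
    (hb2 : ∀ n k, b2 n k = D n k * (1 - a n k - c n k)) :
    ∀ n k : ℕ, 1 ≤ n → k ≤ n →
      0 ≤ τ * a n k + a2 n k ∧
      0 ≤ τ * c n k + c2 n k ∧
      0 ≤ b2 n k - τ * (a n k + c n k) := by
  intro n k _ hkn
  have hk : (0 : ℝ) ≤ k := k.cast_nonneg
  have hkn : (k : ℝ) ≤ n := by exact_mod_cast hkn
  have hs : 0 ≤ β + γ := by linarith
  rw [ha2, hc2, hb2]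
  refine qbd_entries_nonneg hτ1 hτ2 ?_ ?_ ?_ ?_
  · exact (hD n k).symm ▸ half_le_coeffD hγ hβγ' hk
  · exact (ha n k).symm ▸ coeffA_nonneg hα hs hk hkn
  · exact (hc n k).symm ▸ coeffC_nonneg hα hs hk hkn
  · rw [ha, hc]
    exact coeffA_add_coeffC_le_half hα hs hk hkn hreg

/-- Nonnegativity of the possibly-negative entries of `τJ₁ + J₂` for the triangle
polynomials normalized at `(0,1)`, in the regime `β ≥ γ ≥ 0`, `β + γ > 0`,
`α² ≤ (β+γ+1)²`, and `−1/2 ≤ τ ≤ 1/2`. -/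
theorem stmt_19 (α β γ τ : ℝ) (hα : -1 < α) (hβγ' : γ ≤ β) (hγ : 0 ≤ γ)
    (hβγ : 0 < β + γ) (hreg : α ^ 2 ≤ (β + γ + 1) ^ 2)
    (hτ1 : -(1 / 2 : ℝ) ≤ τ) (hτ2 : τ ≤ 1 / 2)
    (a c D a2 c2 b2 : ℕ → ℕ → ℝ)
    (ha : ∀ n k, a n k = ((n : ℝ) - k + α + 1) * ((n : ℝ) + k + α + β + γ + 2)
      / ((2 * (n : ℝ) + α + β + γ + 2) * (2 * (n : ℝ) + α + β + γ + 3)))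
    (hc : ∀ n k, c n k = ((n : ℝ) - k) * ((n : ℝ) + k + β + γ + 1)
      / ((2 * (n : ℝ) + α + β + γ + 1) * (2 * (n : ℝ) + α + β + γ + 2)))
    (hD : ∀ n k, D n k = (1 / 2) * (1 + (β ^ 2 - γ ^ 2)
      / ((2 * (k : ℝ) + β + γ + 2) * (2 * (k : ℝ) + β + γ))))
    (ha2 : ∀ n k, a2 n k = D n k * a n k)
    (hc2 : ∀ n k, c2 n k = D n k * c n k)
    (hb2 : ∀ n k, b2 n k = D n k * (1 - a n k - c n k)) :
    ∀ n k : ℕ, 1 ≤ n → k ≤ n →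
      0 ≤ τ * a n k + a2 n k ∧
      0 ≤ τ * c n k + c2 n k ∧
      0 ≤ b2 n k - τ * (a n k + c n k) :=
  stmt_19_general α β γ τ hα hβγ' hγ hreg hτ1 hτ2 a c D a2 c2 b2 ha hc hD ha2 hc2 hb2
end
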